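/- arXiv:1402.4338 — 6 statements merged into one kernel-verified Lean document; each statement's English description precedes it below -/
import Mathlib

section
/- Let A, B, C, D be four pairwise distinct 2-element subsets of {1,...,n}. Then either at least two of the sets among A, B, C, D are disjoint, or |A ∪ B ∪ C ∪ D| = 5 and |A ∩ B ∩ C ∩ D| = 1. -/
lemma pair_inter {X Y : Finset ℕ} (hX : X.card = 2) (hY : Y.card = 2)
    (hne : X ≠ Y) (h : ¬ Disjoint X Y) : ∃ x, X ∩ Y = {x} := by
  rw [Finset.not_disjoint_iff] at h
  obtain ⟨a, haX, haY⟩ := h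
  have h1 : 1 ≤ (X ∩ Y).card :=
    Finset.card_pos.mpr ⟨a, Finset.mem_inter.mpr ⟨haX, haY⟩⟩
  have h2 : (X ∩ Y).card ≤ 2 := by
    calc (X ∩ Y).card ≤ X.card := Finset.card_le_card (Finset.inter_subset_left)
    _ = 2 := hX
  interval_cases hc : (X ∩ Y).card
  · exact Finset.card_eq_one.mp hc
  · exfalso
    have hXX : X ∩ Y = X := Finset.eq_of_subset_of_card_le Finset.inter_subset_left (by omega)
    have hYY : X ∩ Y = Y := Finset.eq_of_subset_of_card_le Finset.inter_subset_right (by omega)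
    exact hne (hXX ▸ hYY)

lemma pair_other {A : Finset ℕ} {x : ℕ} (h : A.card = 2) (hx : x ∈ A) :
    ∃ a, a ≠ x ∧ A = {x, a} := by
  obtain ⟨u, v, huv, rfl⟩ := Finset.card_eq_two.mp h
  simp only [Finset.mem_insert, Finset.mem_singleton] at hx
  rcases hx with rfl | rfl
  · exact ⟨v, fun h => huv h.symm, rfl⟩
  · exact ⟨u, huv, by rw [Finset.pair_comm]⟩

lemma pair_eq {A : Finset ℕ} {x y : ℕ} (h : A.card = 2) (hx : x ∈ A) (hy : y ∈ A)
    (hxy : x ≠ y) : A = {x, y} := by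
  have hsub : ({x, y} : Finset ℕ) ⊆ A := by
    intro z hz
    simp only [Finset.mem_insert, Finset.mem_singleton] at hz
    rcases hz with rfl | rfl <;> assumption
  exact (Finset.eq_of_subset_of_card_le hsub (by rw [h, Finset.card_pair hxy])).symm

lemma key {A B C D : Finset ℕ}
    (hAc : A.card = 2) (hBc : B.card = 2) (hCc : C.card = 2) (hDc : D.card = 2)
    (hAB : A ≠ B) (hAC : A ≠ C) (hAD : A ≠ D)
    (hBC : B ≠ C) (hBD : B ≠ D) (hCD : C ≠ D)
    (nAC : ¬ Disjoint A C) (nAD : ¬ Disjoint A D)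
    (nBC : ¬ Disjoint B C) (nBD : ¬ Disjoint B D) (nCD : ¬ Disjoint C D)
    {x : ℕ} (hx : A ∩ B = {x}) : x ∈ C := by
  by_contra hxC
  have hxA : x ∈ A := Finset.mem_of_mem_inter_left (hx ▸ Finset.mem_singleton_self x)
  have hxB : x ∈ B := Finset.mem_of_mem_inter_right (hx ▸ Finset.mem_singleton_self x)
  obtain ⟨y, hy⟩ := pair_inter hAc hCc hAC nAC
  obtain ⟨z, hz⟩ := pair_inter hBc hCc hBC nBC
  have hyA : y ∈ A := Finset.mem_of_mem_inter_left (hy ▸ Finset.mem_singleton_self y)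
  have hyC : y ∈ C := Finset.mem_of_mem_inter_right (hy ▸ Finset.mem_singleton_self y)
  have hzB : z ∈ B := Finset.mem_of_mem_inter_left (hz ▸ Finset.mem_singleton_self z)
  have hzC : z ∈ C := Finset.mem_of_mem_inter_right (hz ▸ Finset.mem_singleton_self z)
  have hxy : x ≠ y := fun h => hxC (h ▸ hyC)
  have hxz : x ≠ z := fun h => hxC (h ▸ hzC)
  have hAeq : A = {x, y} := pair_eq hAc hxA hyA hxy
  have hBeq : B = {x, z} := pair_eq hBc hxB hzB hxz
  have hyz : y ≠ z := by
    rintro rfl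
    exact hAB (hAeq.trans hBeq.symm)
  have hCeq : C = {y, z} := pair_eq hCc hyC hzC hyz
  by_cases hxD : x ∈ D
  · obtain ⟨w, hwx, hDeq⟩ := pair_other hDc hxD
    rw [Finset.not_disjoint_iff] at nCD
    obtain ⟨r, hrC, hrD⟩ := nCD
    rw [hCeq] at hrC
    rw [hDeq] at hrD
    simp only [Finset.mem_insert, Finset.mem_singleton] at hrC hrD
    rcases hrD with rfl | rfl
    · rcases hrC with rfl | rfl
      · exact hxy rfl
      · exact hxz rfl
    · rcases hrC with rfl | rfl
      · exact hAD (hAeq.trans hDeq.symm)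
      · exact hBD (hBeq.trans hDeq.symm)
  · rw [Finset.not_disjoint_iff] at nAD nBD
    obtain ⟨p, hpA, hpD⟩ := nAD
    obtain ⟨q, hqB, hqD⟩ := nBD
    rw [hAeq] at hpA
    rw [hBeq] at hqB
    simp only [Finset.mem_insert, Finset.mem_singleton] at hpA hqB
    rcases hpA with rfl | rfl
    · exact hxD hpD
    rcases hqB with rfl | rfl
    · exact hxD hqD
    have hDeq : D = {p, q} := pair_eq hDc hpD hqD hyz
    exact hCD (hCeq.trans hDeq.symm)

theorem four_two_sets (n : ℕ) (A B C D : Finset ℕ)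
    (hA : A ⊆ Finset.Icc 1 n) (hB : B ⊆ Finset.Icc 1 n)
    (hC : C ⊆ Finset.Icc 1 n) (hD : D ⊆ Finset.Icc 1 n)
    (hAc : A.card = 2) (hBc : B.card = 2) (hCc : C.card = 2) (hDc : D.card = 2)
    (hAB : A ≠ B) (hAC : A ≠ C) (hAD : A ≠ D)
    (hBC : B ≠ C) (hBD : B ≠ D) (hCD : C ≠ D) :
    (Disjoint A B ∨ Disjoint A C ∨ Disjoint A D ∨
     Disjoint B C ∨ Disjoint B D ∨ Disjoint C D) ∨
    ((A ∪ B ∪ C ∪ D).card = 5 ∧ (A ∩ B ∩ C ∩ D).card = 1) := by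
  by_cases h : Disjoint A B ∨ Disjoint A C ∨ Disjoint A D ∨
      Disjoint B C ∨ Disjoint B D ∨ Disjoint C D
  · exact Or.inl h
  push_neg at h
  obtain ⟨nAB, nAC, nAD, nBC, nBD, nCD⟩ := h
  obtain ⟨x, hx⟩ := pair_inter hAc hBc hAB nAB
  have hxC : x ∈ C := key hAc hBc hCc hDc hAB hAC hAD hBC hBD hCD nAC nAD nBC nBD nCD hx
  have hxD : x ∈ D := key hAc hBc hDc hCc hAB hAD hAC hBD hBC (Ne.symm hCD) nAD nAC nBD nBC
    (fun hd => nCD (Disjoint.symm hd)) hx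
  have hxA : x ∈ A := Finset.mem_of_mem_inter_left (hx ▸ Finset.mem_singleton_self x)
  have hxB : x ∈ B := Finset.mem_of_mem_inter_right (hx ▸ Finset.mem_singleton_self x)
  obtain ⟨a, hax, hAeq⟩ := pair_other hAc hxA
  obtain ⟨b, hbx, hBeq⟩ := pair_other hBc hxB
  obtain ⟨c, hcx, hCeq⟩ := pair_other hCc hxC
  obtain ⟨d, hdx, hDeq⟩ := pair_other hDc hxD
  have hab : a ≠ b := fun h => hAB (by rw [hAeq, hBeq, h])
  have hac : a ≠ c := fun h => hAC (by rw [hAeq, hCeq, h])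
  have had : a ≠ d := fun h => hAD (by rw [hAeq, hDeq, h])
  have hbc : b ≠ c := fun h => hBC (by rw [hBeq, hCeq, h])
  have hbd : b ≠ d := fun h => hBD (by rw [hBeq, hDeq, h])
  have hcd : c ≠ d := fun h => hCD (by rw [hCeq, hDeq, h])
  right
  constructor
  · have hU : A ∪ B ∪ C ∪ D = {x, a, b, c, d} := by
      rw [hAeq, hBeq, hCeq, hDeq]
      ext t
      simp only [Finset.mem_union, Finset.mem_insert, Finset.mem_singleton]
      tauto
    rw [hU]
    rw [show ({x, a, b, c, d} : Finset ℕ) = insert x (insert a (insert b (insert c {d}))) from rfl]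
    rw [Finset.card_insert_of_notMem (by simp [Ne.symm hax, Ne.symm hbx, Ne.symm hcx, Ne.symm hdx]),
      Finset.card_insert_of_notMem (by simp [hab, hac, had]),
      Finset.card_insert_of_notMem (by simp [hbc, hbd]),
      Finset.card_insert_of_notMem (by simp [hcd]),
      Finset.card_singleton]
  · have hI : A ∩ B ∩ C ∩ D = {x} := by
      rw [hx]
      ext t
      simp only [Finset.mem_inter, Finset.mem_singleton]
      constructor
      · tauto
      · rintro rfl
        exact ⟨⟨rfl, hxC⟩, hxD⟩
    rw [hI, Finset.card_singleton]
end

section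
/- For every n ≥ 5, any function c from the 2-element subsets of {1,...,n} to {1,...,n-3} admits two disjoint 2-element subsets A, B with c(A) = c(B). -/
/-!
Each colour class of a colouring of the 2-subsets of `X` in which equally coloured pairs meet is
an intersecting family of pairs, hence either a star or contained in a triangle. If some class is
a star with centre `v`, deleting `v` and that colour gives a smaller instance, so by induction on
the colours `#X ≤ #K + 2`. If no class is a star, each class has at most `3` pairs, so
`(#X).choose 2 ≤ 3 * #K`, which again forces `#X ≤ #K + 2`. For `X = {1, …, n}` and `n - 3`
colours this is impossible.
-/

open Finset

lemma Nat.three_mul_lt_choose_two (k : ℕ) : 3 * k < (k + 3).choose 2 := by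
  induction k with
  | zero => decide
  | succ k ih =>
    show 3 * (k + 1) < (k + 4).choose 2
    have : (k + 4).choose 2 = (k + 3).choose 1 + (k + 3).choose 2 := Nat.choose_succ_succ' _ _
    rw [Nat.choose_one_right] at this
    omega

lemma Nat.le_add_two_of_choose_two_le {m k : ℕ} (h : m.choose 2 ≤ 3 * k) : m ≤ k + 2 := by
  by_contra! hm
  have := Nat.choose_le_choose 2 (show k + 3 ≤ m by omega)
  have := Nat.three_mul_lt_choose_two k
  omega

namespace Finset

variable {α : Type*} [DecidableEq α]

lemma exists_eq_pair_of_mem {A : Finset α} {x : α} (hA : #A = 2) (hx : x ∈ A) :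
    ∃ y, A = {x, y} := by
  obtain ⟨a, b, -, rfl⟩ := card_eq_two.mp hA
  rcases mem_insert.mp hx with rfl | hxb
  · exact ⟨b, rfl⟩
  · exact ⟨a, by rw [mem_singleton.mp hxb, pair_comm]⟩

lemma mem_of_not_disjoint_pair {D : Finset α} {a b : α} (hD : ¬Disjoint {a, b} D)
    (ha : a ∉ D) : b ∈ D := by
  simp only [disjoint_insert_left, disjoint_singleton_left, not_and, not_not] at hD
  exact hD ha

lemma exists_mem_forall_mem_or_card_le_three {F : Finset (Finset α)}
    (hF₂ : ∀ A ∈ F, #A = 2) (hF : (F : Set (Finset α)).Intersecting) :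
    (∃ v, ∀ A ∈ F, v ∈ A) ∨ #F ≤ 3 := by
  by_cases hstar : ∃ v, ∀ A ∈ F, v ∈ A
  · exact .inl hstar
  right
  push Not at hstar
  rcases F.eq_empty_or_nonempty with rfl | ⟨A, hA⟩
  · simp
  obtain ⟨x, y, -, rfl⟩ := card_eq_two.mp (hF₂ _ hA)
  obtain ⟨B, hB, hxB⟩ := hstar x
  obtain ⟨C, hC, hyC⟩ := hstar y
  have hyB : y ∈ B := mem_of_not_disjoint_pair (hF hA hB) hxB
  obtain ⟨z, rfl⟩ := exists_eq_pair_of_mem (hF₂ _ hB) hyB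
  have hxz : x ≠ z := by rintro rfl; simp at hxB
  have hCxz : C = {x, z} := by
    have hxC : x ∈ C := mem_of_not_disjoint_pair (pair_comm x y ▸ hF hA hC) hyC
    have hzC : z ∈ C := mem_of_not_disjoint_pair (hF hB hC) hyC
    refine (eq_of_subset_of_card_le (insert_subset hxC (singleton_subset_iff.2 hzC)) ?_).symm
    rw [hF₂ _ hC, card_pair hxz]
  subst hCxz
  -- A non-star intersecting family of pairs lies in the triangle `{x, y, z}`.
  have hsub : F ⊆ ({x, y, z} : Finset α).powersetCard 2 := by
    intro D hD
    refine mem_powersetCard.2 ⟨fun d hd => ?_, hF₂ _ hD⟩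
    by_contra hdT
    simp only [mem_insert, mem_singleton, not_or] at hdT
    obtain ⟨e, rfl⟩ := exists_eq_pair_of_mem (hF₂ _ hD) hd
    obtain ⟨hdx, hdy, hdz⟩ := hdT
    have heA : e ∈ ({x, y} : Finset α) :=
      mem_of_not_disjoint_pair (hF hD hA) (by simp [hdx, hdy])
    have heB : e ∈ ({y, z} : Finset α) :=
      mem_of_not_disjoint_pair (hF hD hB) (by simp [hdy, hdz])
    have heC : e ∈ ({x, z} : Finset α) :=
      mem_of_not_disjoint_pair (hF hD hC) (by simp [hdx, hdz])
    simp only [mem_insert, mem_singleton] at heA heB heC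
    grind
  calc #F ≤ #(({x, y, z} : Finset α).powersetCard 2) := card_le_card hsub
    _ ≤ (3 : ℕ).choose 2 := by
      rw [card_powersetCard]; exact Nat.choose_le_choose 2 card_le_three
    _ = 3 := rfl

theorem card_le_card_add_two_of_kneser_coloring {κ : Type*} [DecidableEq κ] (X : Finset α)
    (K : Finset κ) (c : Finset α → κ)
    (hcK : ∀ A ∈ X.powersetCard 2, c A ∈ K)
    (hc : ∀ A ∈ X.powersetCard 2, ∀ B ∈ X.powersetCard 2, c A = c B → ¬Disjoint A B) :
    #X ≤ #K + 2 := by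
  induction K using strongInduction generalizing X with
  | H K ih =>
  by_cases hstar : ∃ i ∈ K, ∃ v, ∀ A ∈ X.powersetCard 2, c A = i → v ∈ A
  · obtain ⟨i, hi, v, hv⟩ := hstar
    have hsub : X.erase v ⊆ X := erase_subset v X
    have hcK' : ∀ A ∈ (X.erase v).powersetCard 2, c A ∈ K.erase i := by
      intro A hA
      have hA' := powersetCard_mono hsub hA
      refine mem_erase.2 ⟨fun hci => ?_, hcK A hA'⟩
      exact notMem_erase v X ((mem_powersetCard.1 hA).1 (hv A hA' hci))
    have hrec := ih (K.erase i) (erase_ssubset hi) (X.erase v) hcK' fun A hA B hB =>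
      hc A (powersetCard_mono hsub hA) B (powersetCard_mono hsub hB)
    have := pred_card_le_card_erase (s := X) (a := v)
    have := card_pos.2 ⟨i, hi⟩
    rw [card_erase_of_mem hi] at hrec
    omega
  · push Not at hstar
    have hfiber : ∀ i ∈ K, #{A ∈ X.powersetCard 2 | c A = i} ≤ 3 := by
      intro i hi
      refine (exists_mem_forall_mem_or_card_le_three (fun A hA => ?_) ?_).resolve_left ?_
      · exact (mem_powersetCard.1 (mem_filter.1 hA).1).2
      · intro A hA B hB
        simp only [coe_filter, Set.mem_ofPred_eq] at hA hB
        exact hc A hA.1 B hB.1 (hA.2.trans hB.2.symm)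
      · rintro ⟨v, hv⟩
        obtain ⟨A, hA, hcA, hvA⟩ := hstar i hi v
        exact hvA (hv A (mem_filter.2 ⟨hA, hcA⟩))
    apply Nat.le_add_two_of_choose_two_le
    rw [← card_powersetCard]
    exact card_le_mul_card_image_of_maps_to hcK 3 hfiber

end Finset

theorem kneser_lovasz_k2 (n : ℕ) (hn : 5 ≤ n) (c : Finset ℕ → ℕ)
    (hc : ∀ A ⊆ Finset.Icc 1 n, A.card = 2 → c A ∈ Finset.Icc 1 (n - 3)) :
    ∃ A B : Finset ℕ, A ⊆ Finset.Icc 1 n ∧ B ⊆ Finset.Icc 1 n ∧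
      A.card = 2 ∧ B.card = 2 ∧ Disjoint A B ∧ c A = c B := by
  by_contra! hproper
  have := card_le_card_add_two_of_kneser_coloring (Icc 1 n) (Icc 1 (n - 3)) c
    (fun A hA => hc A (mem_powersetCard.1 hA).1 (mem_powersetCard.1 hA).2)
    (fun A hA B hB hAB hdisj => hproper A B (mem_powersetCard.1 hA).1 (mem_powersetCard.1 hB).1
      (mem_powersetCard.1 hA).2 (mem_powersetCard.1 hB).2 hdisj hAB)
  simp only [Nat.card_Icc] at this
  omega
end

section
/- For every n ≥ 7, any function c from the 3-element subsets of {1,...,n} to {1,...,n-5} admits two disjoint 3-element subsets A, B with c(A) = c(B). -/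
open Finset

lemma arith (n : ℕ) (hn : 7 ≤ n) : (n-5)*(3*n-7) < n.choose 3 := by
  obtain ⟨k, rfl⟩ : ∃ k, n = k + 7 := ⟨n - 7, by omega⟩
  have h6 : Nat.factorial 3 * (k+7).choose 3 = (k+7) * (k+6) * (k+5) := by
    rw [← Nat.descFactorial_eq_factorial_mul_choose]
    simp [Nat.descFactorial]; ring
  have h6' : 6 * (k+7).choose 3 = (k+7) * (k+6) * (k+5) := by
    simpa [Nat.factorial] using h6
  have hlt : 6 * ((k+2)*(3*(k+7)-7)) < (k+7) * (k+6) * (k+5) := by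
    have h7 : 3*(k+7)-7 = 3*k+14 := by omega
    rw [h7]
    by_cases h4 : k ≤ 3
    · interval_cases k <;> norm_num
    · nlinarith [k*k*k, sq_nonneg k]
  have h5 : (k+7)-5 = k+2 := by omega
  rw [h5]
  omega

section helpers
lemma card_le_of_maps (F : Finset (Finset ℕ)) (Y : Finset ℕ) (g : ℕ → Finset ℕ)
    (h : ∀ C ∈ F, ∃ z ∈ Y, C = g z) : F.card ≤ Y.card := by
  classical
  calc F.card ≤ (Y.image g).card := by
        apply card_le_card
        intro C hC
        obtain ⟨z, hz, rfl⟩ := h C hC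
        exact mem_image_of_mem g hz
    _ ≤ Y.card := card_image_le

lemma triple_struct2 (C : Finset ℕ) (hC : C.card = 3) (u v : ℕ) (hu : u ∈ C) (hv : v ∈ C)
    (huv : u ≠ v) : ∃ z, z ≠ u ∧ z ≠ v ∧ C = {u, v, z} := by
  classical
  have hsub : ({u, v} : Finset ℕ) ⊆ C := by
    intro x hx; simp at hx; rcases hx with rfl | rfl <;> assumption
  have hcard2 : ({u, v} : Finset ℕ).card = 2 := card_pair huv
  have h1 : (C \ {u, v}).card = 1 := by
    rw [card_sdiff_of_subset hsub, hC, hcard2]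
  obtain ⟨z, hz⟩ := card_eq_one.mp h1
  have hzmem : z ∈ C \ ({u, v} : Finset ℕ) := by rw [hz]; exact mem_singleton_self z
  have hzC := (mem_sdiff.mp hzmem).1
  have hznot := (mem_sdiff.mp hzmem).2
  simp only [mem_insert, mem_singleton] at hznot
  push_neg at hznot
  refine ⟨z, hznot.1, hznot.2, ?_⟩
  have : C = {u, v} ∪ (C \ {u, v}) := by
    rw [union_sdiff_of_subset hsub]
  rw [this, hz]
  ext x; simp [or_assoc]
lemma triple_struct1 (C : Finset ℕ) (hC : C.card = 3) (u : ℕ) (hu : u ∈ C) :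
    ∃ y z, y ≠ z ∧ u ≠ y ∧ u ≠ z ∧ C = {u, y, z} := by
  classical
  have h2 : (C.erase u).card = 2 := by rw [card_erase_of_mem hu, hC]
  obtain ⟨y, z, hyz, hE⟩ := card_eq_two.mp h2
  have hy : y ∈ C.erase u := by rw [hE]; simp
  have hz : z ∈ C.erase u := by rw [hE]; simp
  refine ⟨y, z, hyz, fun h => (mem_erase.mp hy).1 h.symm, fun h => (mem_erase.mp hz).1 h.symm, ?_⟩
  rw [← insert_erase hu, hE]
end helpers

-- K-counting lemma: sets of F meeting pattern (a ∈ C, b ∉ C, c ∉ C, y ∈ C) number ≤ 2,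
-- given E ∈ F avoiding a and y.
lemma Kcount (F : Finset (Finset ℕ)) (h3 : ∀ C ∈ F, C.card = 3)
    (hI : ∀ C ∈ F, ∀ D ∈ F, (C ∩ D).Nonempty)
    (a b c y : ℕ) (hay : a ≠ y)
    (hA : ({a, b, c} : Finset ℕ) ∈ F)
    (E : Finset ℕ) (hE : E ∈ F) (haE : a ∉ E) (hyE : y ∉ E)
    (F' : Finset (Finset ℕ))
    (hF' : ∀ C ∈ F', C ∈ F ∧ a ∈ C ∧ b ∉ C ∧ c ∉ C ∧ y ∈ C) :
    F'.card ≤ 2 := by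
  classical
  have hZ : (E \ ({a, b, c} : Finset ℕ)).card ≤ 2 := by
    have h1 := card_sdiff_add_card_inter E ({a, b, c} : Finset ℕ)
    have h2 : (E ∩ ({a, b, c} : Finset ℕ)).Nonempty := hI E hE _ hA
    have h3' := h3 E hE
    have := card_pos.mpr h2
    omega
  refine le_trans (card_le_of_maps F' _ (fun z => {a, y, z}) ?_) hZ
  intro C hC
  obtain ⟨hCF, haC, hbC, hcC, hyC⟩ := hF' C hC
  obtain ⟨z, hza, hzy, hCz⟩ := triple_struct2 C (h3 C hCF) a y haC hyC hay
  obtain ⟨x, hx⟩ := hI C hCF E hE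
  have hxC : x ∈ C := (mem_inter.mp hx).1
  have hxE : x ∈ E := (mem_inter.mp hx).2
  have hxz : x = z := by
    rw [hCz] at hxC; simp at hxC
    rcases hxC with rfl | rfl | rfl
    · exact absurd hxE haE
    · exact absurd hxE hyE
    · rfl
  subst hxz
  refine ⟨x, mem_sdiff.mpr ⟨hxE, ?_⟩, hCz⟩
  simp only [mem_insert, mem_singleton]
  push_neg
  refine ⟨hza, ?_, ?_⟩
  · rintro rfl; rw [hCz] at hbC; simp at hbC
  · rintro rfl; rw [hCz] at hcC; simp at hcC

-- bound on the combined class ST_a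
lemma ST_bound (F : Finset (Finset ℕ)) (h3 : ∀ C ∈ F, C.card = 3)
    (hI : ∀ C ∈ F, ∀ D ∈ F, (C ∩ D).Nonempty)
    (htau : ∀ u v : ℕ, ∃ E ∈ F, u ∉ E ∧ v ∉ E)
    (a b c p q s t : ℕ)
    (hA : ({a, b, c} : Finset ℕ) ∈ F) (hbc : b ≠ c)
    (hG1 : ({a, p, q} : Finset ℕ) ∈ F) (hpA : p ∉ ({a, b, c} : Finset ℕ))
    (hqA : q ∉ ({a, b, c} : Finset ℕ))
    (has : a ≠ s) (hat : a ≠ t)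
    (hst : ∀ C ∈ F, a ∈ C → b ∉ C → c ∉ C → s ∈ C ∨ t ∈ C)
    (ST : Finset (Finset ℕ))
    (hST : ∀ C ∈ ST, C ∈ F ∧ ((a ∈ C ∧ b ∉ C ∧ c ∉ C) ∨ (a ∉ C ∧ b ∈ C ∧ c ∈ C))) :
    ST.card ≤ 4 := by
  classical
  set S := ST.filter (fun C => a ∈ C) with hSdef
  set T := ST.filter (fun C => a ∉ C) with hTdef
  have hsplit : ST = S ∪ T := by
    ext C; simp [hSdef, hTdef]; tauto
  have hScard : ∀ C ∈ S, C ∈ F ∧ a ∈ C ∧ b ∉ C ∧ c ∉ C := by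
    intro C hC
    rw [hSdef] at hC
    obtain ⟨hC1, hC2⟩ := mem_filter.mp hC
    obtain ⟨hCF, hpat⟩ := hST C hC1
    rcases hpat with ⟨h1, h2, h3'⟩ | ⟨h1, _, _⟩
    · exact ⟨hCF, h1, h2, h3'⟩
    · exact absurd hC2 h1
  have hTcard : ∀ C ∈ T, C ∈ F ∧ a ∉ C ∧ b ∈ C ∧ c ∈ C := by
    intro C hC
    rw [hTdef] at hC
    obtain ⟨hC1, hC2⟩ := mem_filter.mp hC
    obtain ⟨hCF, hpat⟩ := hST C hC1
    rcases hpat with ⟨h1, _, _⟩ | ⟨h1, h2, h3'⟩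
    · exact absurd h1 hC2
    · exact ⟨hCF, h1, h2, h3'⟩
  -- structure of T-sets: D = {b, c, z} with z ∈ {p,q}
  have hTstruct : ∀ D ∈ T, ∃ z, z ∉ ({a, b, c} : Finset ℕ) ∧ z ∈ ({p, q} : Finset ℕ) ∧
      D = {b, c, z} := by
    intro D hD
    obtain ⟨hDF, haD, hbD, hcD⟩ := hTcard D hD
    obtain ⟨z, hzb, hzc, hDz⟩ := triple_struct2 D (h3 D hDF) b c hbD hcD hbc
    have hzD : z ∈ D := by rw [hDz]; simp
    have hza : z ≠ a := by rintro rfl; exact haD hzD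
    obtain ⟨x, hx⟩ := hI D hDF _ hG1
    have hxD : x ∈ D := (mem_inter.mp hx).1
    have hxG : x ∈ ({a, p, q} : Finset ℕ) := (mem_inter.mp hx).2
    have hxa : x ≠ a := by rintro rfl; exact haD hxD
    simp only [mem_insert, mem_singleton] at hpA hqA
    push_neg at hpA hqA
    have hxz : x = z := by
      rw [hDz] at hxD; simp at hxD
      rcases hxD with rfl | rfl | rfl
      · simp at hxG; rcases hxG with rfl | rfl | rfl
        · exact absurd rfl hxa
        · exact absurd rfl (Ne.symm hpA.2.1)
        · exact absurd rfl (Ne.symm hqA.2.1)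
      · simp at hxG; rcases hxG with rfl | rfl | rfl
        · exact absurd rfl hxa
        · exact absurd rfl (Ne.symm hpA.2.2)
        · exact absurd rfl (Ne.symm hqA.2.2)
      · rfl
    refine ⟨z, ?_, ?_, hDz⟩
    · simp only [mem_insert, mem_singleton]; push_neg; exact ⟨hza, hzb, hzc⟩
    · rw [← hxz] at *
      simp at hxG ⊢
      rcases hxG with rfl | h | h
      · exact absurd rfl hxa
      · exact Or.inl h
      · exact Or.inr h
  -- T has at most 2 elements
  have hT2 : T.card ≤ 2 := by
    have : T.card ≤ ({p, q} : Finset ℕ).card := by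
      apply card_le_of_maps T _ (fun z => {b, c, z})
      intro D hD
      obtain ⟨z, _, hz2, hz3⟩ := hTstruct D hD
      exact ⟨z, hz2, hz3⟩
    have hpq2 : ({p, q} : Finset ℕ).card ≤ 2 := card_insert_le _ _ |>.trans (by simp)
    omega
  -- S-sets with a given y ∈ C are ≤ 2
  have hSy : ∀ y : ℕ, a ≠ y → ∀ S' : Finset (Finset ℕ),
      (∀ C ∈ S', C ∈ S ∧ y ∈ C) → S'.card ≤ 2 := by
    intro y hay S' hS'
    obtain ⟨E, hE, haE, hyE⟩ := htau a y
    apply Kcount F h3 hI a b c y hay hA E hE haE hyE S'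
    intro C hC
    obtain ⟨hCS, hyC⟩ := hS' C hC
    obtain ⟨hCF, h1, h2, h3'⟩ := hScard C hCS
    exact ⟨hCF, h1, h2, h3', hyC⟩
  rw [hsplit]
  refine le_trans (card_union_le S T) ?_
  by_cases hTne : T.Nonempty
  · -- trade case: S-sets all contain z (third element of some D ∈ T)
    obtain ⟨D, hD⟩ := hTne
    obtain ⟨z, hzA, _, hDz⟩ := hTstruct D hD
    simp only [mem_insert, mem_singleton] at hzA
    push_neg at hzA
    have hSz : S.card ≤ 2 := by
      apply hSy z (Ne.symm hzA.1) S
      intro C hC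
      refine ⟨hC, ?_⟩
      obtain ⟨hCF, h1, h2, h3'⟩ := hScard C hC
      obtain ⟨x, hx⟩ := hI C hCF D (hTcard D hD).1
      have hxC : x ∈ C := (mem_inter.mp hx).1
      have hxD : x ∈ D := (mem_inter.mp hx).2
      rw [hDz] at hxD; simp at hxD
      rcases hxD with rfl | rfl | rfl
      · exact absurd hxC h2
      · exact absurd hxC h3'
      · exact hxC
    omega
  · -- T empty: S ≤ 4 by splitting on s or t
    have hT0 : T.card = 0 := by simp [not_nonempty_iff_eq_empty.mp hTne]
    set Ss := S.filter (fun C => s ∈ C) with hSs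
    set St := S.filter (fun C => s ∉ C) with hStd
    have : S = Ss ∪ St := by ext C; simp [hSs, hStd]; tauto
    have hs2 : Ss.card ≤ 2 := by
      apply hSy s has Ss
      intro C hC; exact ⟨(mem_filter.mp hC).1, (mem_filter.mp hC).2⟩
    have ht2 : St.card ≤ 2 := by
      apply hSy t hat St
      intro C hC
      obtain ⟨hCS, hsC⟩ := mem_filter.mp hC
      obtain ⟨hCF, h1, h2, h3'⟩ := hScard C hCS
      rcases hst C hCF h1 h2 h3' with h | h
      · exact absurd h hsC
      · exact ⟨hCS, h⟩
    have hcu := card_union_le Ss St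
    have hScard2 : S.card ≤ Ss.card + St.card := by rw [this]; exact hcu
    omega

lemma tau3 (F : Finset (Finset ℕ)) (h3 : ∀ C ∈ F, C.card = 3)
    (hI : ∀ C ∈ F, ∀ D ∈ F, (C ∩ D).Nonempty)
    (htau : ∀ u v : ℕ, ∃ E ∈ F, u ∉ E ∧ v ∉ E) : F.card ≤ 13 := by
  classical
  obtain ⟨A, hAF, -, -⟩ := htau 0 0
  obtain ⟨a, b, c, hab, hac, hbc, hAeq⟩ := card_eq_three.mp (h3 A hAF)
  subst hAeq
  -- helper: for x distinct from the triple elements, build G-set and s,t data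
  -- G-set for index (x, y, z) : set in F through x avoiding y z with both others outside A
  have buildG : ∀ x y z : ℕ, ({x, y, z} : Finset ℕ) ∈ F → x ≠ y → x ≠ z → y ≠ z →
      ∃ p q, ({x, p, q} : Finset ℕ) ∈ F ∧ p ∉ ({x, y, z} : Finset ℕ) ∧
        q ∉ ({x, y, z} : Finset ℕ) := by
    intro x y z hxyz hxy hxz hyz
    obtain ⟨G, hGF, hyG, hzG⟩ := htau y z
    have hxG : x ∈ G := by
      obtain ⟨w, hw⟩ := hI G hGF _ hxyz
      have hwG : w ∈ G := (mem_inter.mp hw).1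
      have hwA : w ∈ ({x, y, z} : Finset ℕ) := (mem_inter.mp hw).2
      simp at hwA
      rcases hwA with rfl | rfl | rfl
      · exact hwG
      · exact absurd hwG hyG
      · exact absurd hwG hzG
    obtain ⟨p', q', hpq', hxp', hxq', hGeq⟩ := triple_struct1 G (h3 G hGF) x hxG
    refine ⟨p', q', hGeq ▸ hGF, ?_, ?_⟩
    · simp only [mem_insert, mem_singleton]; push_neg
      refine ⟨Ne.symm hxp', ?_, ?_⟩
      · rintro rfl; exact hyG (hGeq ▸ (by simp : p' ∈ ({x, p', q'} : Finset ℕ)))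
      · rintro rfl; exact hzG (hGeq ▸ (by simp : p' ∈ ({x, p', q'} : Finset ℕ)))
    · simp only [mem_insert, mem_singleton]; push_neg
      refine ⟨Ne.symm hxq', ?_, ?_⟩
      · rintro rfl; exact hyG (hGeq ▸ (by simp : q' ∈ ({x, p', q'} : Finset ℕ)))
      · rintro rfl; exact hzG (hGeq ▸ (by simp : q' ∈ ({x, p', q'} : Finset ℕ)))
  -- helper: build s,t data for index x (others y z)
  have buildst : ∀ x y z : ℕ, ({x, y, z} : Finset ℕ) ∈ F →
      ∃ s t, x ≠ s ∧ x ≠ t ∧ (∀ C ∈ F, x ∈ C → y ∉ C → z ∉ C → s ∈ C ∨ t ∈ C) := by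
    intro x y z hxyz
    obtain ⟨H, hHF, hxH, -⟩ := htau x x
    obtain ⟨w, hw⟩ := hI H hHF _ hxyz
    have hwH : w ∈ H := (mem_inter.mp hw).1
    have hwA : w ∈ ({x, y, z} : Finset ℕ) := (mem_inter.mp hw).2
    have h2 : (H.erase w).card = 2 := by rw [card_erase_of_mem hwH, h3 H hHF]
    obtain ⟨s, t, hst, hHe⟩ := card_eq_two.mp h2
    have hsH : s ∈ H := mem_of_mem_erase (hHe ▸ (by simp : s ∈ ({s, t} : Finset ℕ)))
    have htH : t ∈ H := mem_of_mem_erase (hHe ▸ (by simp : t ∈ ({s, t} : Finset ℕ)))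
    refine ⟨s, t, fun h => hxH (h ▸ hsH), fun h => hxH (h ▸ htH), ?_⟩
    intro C hCF hxC hyC hzC
    obtain ⟨u, hu⟩ := hI C hCF H hHF
    have huC : u ∈ C := (mem_inter.mp hu).1
    have huH : u ∈ H := (mem_inter.mp hu).2
    have hux : u ≠ x := by rintro rfl; exact hxH huH
    have huw : u ≠ w := by
      rintro rfl
      simp at hwA
      rcases hwA with rfl | rfl | rfl
      · exact hux rfl
      · exact hyC huC
      · exact hzC huC
    have : u ∈ H.erase w := mem_erase.mpr ⟨huw, huH⟩
    rw [hHe] at this; simp at this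
    rcases this with rfl | rfl
    · exact Or.inl huC
    · exact Or.inr huC
  -- permuted copies of A
  have hA2 : ({b, a, c} : Finset ℕ) ∈ F := by
    have : ({b, a, c} : Finset ℕ) = {a, b, c} := by ext w; simp; tauto
    rw [this]; exact hAF
  have hA3 : ({c, a, b} : Finset ℕ) ∈ F := by
    have : ({c, a, b} : Finset ℕ) = {a, b, c} := by ext w; simp; tauto
    rw [this]; exact hAF
  -- ST sets
  set STa := F.filter (fun C => (a ∈ C ∧ b ∉ C ∧ c ∉ C) ∨ (a ∉ C ∧ b ∈ C ∧ c ∈ C)) with hSTa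
  set STb := F.filter (fun C => (b ∈ C ∧ a ∉ C ∧ c ∉ C) ∨ (b ∉ C ∧ a ∈ C ∧ c ∈ C)) with hSTb
  set STc := F.filter (fun C => (c ∈ C ∧ a ∉ C ∧ b ∉ C) ∨ (c ∉ C ∧ a ∈ C ∧ b ∈ C)) with hSTc
  have hcov : F ⊆ insert ({a, b, c} : Finset ℕ) (STa ∪ STb ∪ STc) := by
    intro C hC
    by_cases ha' : a ∈ C <;> by_cases hb' : b ∈ C <;> by_cases hc' : c ∈ C
    · -- all three: C = A
      have hsub : ({a, b, c} : Finset ℕ) ⊆ C := by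
        intro w hw; simp at hw; rcases hw with rfl | rfl | rfl <;> assumption
      have : C = ({a, b, c} : Finset ℕ) := by
        refine (eq_of_subset_of_card_le hsub ?_).symm
        rw [h3 C hC]
        have : ({a, b, c} : Finset ℕ).card = 3 :=
          card_eq_three.mpr ⟨a, b, c, hab, hac, hbc, rfl⟩
        omega
      simp [this]
    · refine mem_insert_of_mem (mem_union_right _ ?_); rw [hSTc]
      exact mem_filter.mpr ⟨hC, Or.inr ⟨hc', ha', hb'⟩⟩
    · refine mem_insert_of_mem (mem_union_left _ (mem_union_right _ ?_)); rw [hSTb]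
      exact mem_filter.mpr ⟨hC, Or.inr ⟨hb', ha', hc'⟩⟩
    · refine mem_insert_of_mem (mem_union_left _ (mem_union_left _ ?_)); rw [hSTa]
      exact mem_filter.mpr ⟨hC, Or.inl ⟨ha', hb', hc'⟩⟩
    · refine mem_insert_of_mem (mem_union_left _ (mem_union_left _ ?_)); rw [hSTa]
      exact mem_filter.mpr ⟨hC, Or.inr ⟨ha', hb', hc'⟩⟩
    · refine mem_insert_of_mem (mem_union_left _ (mem_union_right _ ?_)); rw [hSTb]
      exact mem_filter.mpr ⟨hC, Or.inl ⟨hb', ha', hc'⟩⟩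
    · refine mem_insert_of_mem (mem_union_right _ ?_); rw [hSTc]
      exact mem_filter.mpr ⟨hC, Or.inl ⟨hc', ha', hb'⟩⟩
    · -- none: contradiction with intersecting
      exfalso
      obtain ⟨w, hw⟩ := hI C hC _ hAF
      have hwC : w ∈ C := (mem_inter.mp hw).1
      have hwA : w ∈ ({a, b, c} : Finset ℕ) := (mem_inter.mp hw).2
      simp at hwA
      rcases hwA with rfl | rfl | rfl
      · exact ha' hwC
      · exact hb' hwC
      · exact hc' hwC
  -- bounds on each ST
  obtain ⟨pa, qa, hGa, hpa, hqa⟩ := buildG a b c hAF hab hac hbc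
  obtain ⟨sa, ta, hasa, hata, hsta⟩ := buildst a b c hAF
  have hSTa4 : STa.card ≤ 4 := by
    apply ST_bound F h3 hI htau a b c pa qa sa ta hAF hbc hGa hpa hqa hasa hata hsta STa
    intro C hC; exact ⟨(mem_filter.mp hC).1, (mem_filter.mp hC).2⟩
  obtain ⟨pb, qb, hGb, hpb, hqb⟩ := buildG b a c hA2 (Ne.symm hab) hbc hac
  obtain ⟨sb, tb, hbsb, hbtb, hstb⟩ := buildst b a c hA2
  have hSTb4 : STb.card ≤ 4 := by
    apply ST_bound F h3 hI htau b a c pb qb sb tb hA2 hac hGb hpb hqb hbsb hbtb hstb STb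
    intro C hC; exact ⟨(mem_filter.mp hC).1, (mem_filter.mp hC).2⟩
  obtain ⟨pc, qc, hGc, hpc, hqc⟩ := buildG c a b hA3 (Ne.symm hac) (Ne.symm hbc) hab
  obtain ⟨sc, tc, hcsc, hctc, hstc⟩ := buildst c a b hA3
  have hSTc4 : STc.card ≤ 4 := by
    apply ST_bound F h3 hI htau c a b pc qc sc tc hA3 hab hGc hpc hqc hcsc hctc hstc STc
    intro C hC; exact ⟨(mem_filter.mp hC).1, (mem_filter.mp hC).2⟩
  calc F.card ≤ (insert ({a, b, c} : Finset ℕ) (STa ∪ STb ∪ STc)).card := card_le_card hcov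
    _ ≤ (STa ∪ STb ∪ STc).card + 1 := card_insert_le _ _
    _ ≤ 13 := by
        have h1 := card_union_le (STa ∪ STb) STc
        have h2 := card_union_le STa STb
        omega

lemma pair_struct (C : Finset ℕ) (hC : C.card = 2) (u : ℕ) (hu : u ∈ C) :
    ∃ z, z ≠ u ∧ C = {u, z} := by
  classical
  have h1 : (C.erase u).card = 1 := by rw [card_erase_of_mem hu, hC]
  obtain ⟨z, hz⟩ := card_eq_one.mp h1
  have hzm : z ∈ C.erase u := by rw [hz]; simp
  refine ⟨z, (mem_erase.mp hzm).1, ?_⟩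
  rw [← insert_erase hu, hz]


lemma graph_lemma (G : Finset (Finset ℕ)) (Y : Finset ℕ) (hY : 4 ≤ Y.card)
    (hG : ∀ e ∈ G, e ⊆ Y ∧ e.card = 2)
    (hint : ∀ e ∈ G, ∀ f ∈ G, (e ∩ f).Nonempty) : G.card + 1 ≤ Y.card := by
  classical
  by_cases hsmall : G.card ≤ 1
  · omega
  push_neg at hsmall
  obtain ⟨e, he, f, hf, hef⟩ := one_lt_card.mp hsmall
  obtain ⟨a, ha⟩ := hint e he f hf
  have hae : a ∈ e := (mem_inter.mp ha).1
  have haf : a ∈ f := (mem_inter.mp ha).2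
  obtain ⟨x, hxa, hex⟩ := pair_struct e (hG e he).2 a hae
  obtain ⟨y, hya, hfy⟩ := pair_struct f (hG f hf).2 a haf
  have hxy : x ≠ y := by
    rintro rfl; exact hef (hex.trans hfy.symm)
  have key : ∀ g ∈ G, a ∈ g ∨ g = {x, y} := by
    intro g hg
    by_cases hag : a ∈ g
    · exact Or.inl hag
    right
    obtain ⟨p, hp⟩ := hint g hg e he
    have hpg : p ∈ g := (mem_inter.mp hp).1
    have hpe : p ∈ e := (mem_inter.mp hp).2
    have hpx : p = x := by
      rw [hex] at hpe; simp at hpe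
      rcases hpe with rfl | rfl
      · exact absurd hpg hag
      · rfl
    obtain ⟨q, hq⟩ := hint g hg f hf
    have hqg : q ∈ g := (mem_inter.mp hq).1
    have hqf : q ∈ f := (mem_inter.mp hq).2
    have hqy : q = y := by
      rw [hfy] at hqf; simp at hqf
      rcases hqf with rfl | rfl
      · exact absurd hqg hag
      · rfl
    have hxg : x ∈ g := hpx ▸ hpg
    have hyg : y ∈ g := hqy ▸ hqg
    have hsub : ({x, y} : Finset ℕ) ⊆ g := by
      intro w hw; simp at hw; rcases hw with rfl | rfl <;> assumption
    exact (eq_of_subset_of_card_le hsub (by rw [(hG g hg).2, card_pair hxy])).symm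
  by_cases hxyG : ({x, y} : Finset ℕ) ∈ G
  · -- G ⊆ {e, f, {x,y}} : triangle, card ≤ 3
    have hsub : G ⊆ {e, f, ({x, y} : Finset ℕ)} := by
      intro g hg
      rcases key g hg with hag | hgxy
      · -- a ∈ g, g meets {x,y}
        obtain ⟨w, hw⟩ := hint g hg _ hxyG
        have hwg : w ∈ g := (mem_inter.mp hw).1
        have hwxy : w ∈ ({x, y} : Finset ℕ) := (mem_inter.mp hw).2
        have hwa : w ≠ a := by
          rintro rfl
          simp at hwxy
          rcases hwxy with rfl | rfl
          · exact hxa rfl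
          · exact hya rfl
        have hsub2 : ({a, w} : Finset ℕ) ⊆ g := by
          intro u hu; simp at hu; rcases hu with rfl | rfl <;> assumption
        have hg2 : g = {a, w} :=
          (eq_of_subset_of_card_le hsub2 (by rw [(hG g hg).2, card_pair (Ne.symm hwa)])).symm
        simp at hwxy
        rcases hwxy with rfl | rfl
        · simp [hg2, hex]
        · simp [hg2, hfy]
      · simp [hgxy]
    calc G.card + 1 ≤ 3 + 1 := by
          have := card_le_card hsub
          have h3 : ({e, f, ({x, y} : Finset ℕ)} : Finset (Finset ℕ)).card ≤ 3 := by
            apply le_trans (card_insert_le _ _)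
            have := card_insert_le f ({({x, y} : Finset ℕ)} : Finset (Finset ℕ))
            simp at this ⊢; omega
          omega
      _ ≤ Y.card := by omega
  · -- all edges through a  : star
    have haY : a ∈ Y := (hG e he).1 hae
    have : G.card ≤ (Y.erase a).card := by
      apply card_le_of_maps G (Y.erase a) (fun w => {a, w})
      intro g hg
      have hag : a ∈ g := by
        rcases key g hg with h | h
        · exact h
        · exact absurd (h ▸ hg) hxyG
      obtain ⟨z, hza, hgz⟩ := pair_struct g (hG g hg).2 a hag
      refine ⟨z, mem_erase.mpr ⟨hza, (hG g hg).1 (by rw [hgz]; simp)⟩, hgz⟩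
    rw [card_erase_of_mem haY] at this
    omega

-- sets containing u (not v) whose links pairwise intersect: star/triangle bound
lemma nomatch_bound (X : Finset ℕ) (hX : 7 ≤ X.card) (u v : ℕ) (hvX : v ∈ X)
    (F' : Finset (Finset ℕ))
    (h : ∀ C ∈ F', C ⊆ X ∧ C.card = 3 ∧ u ∈ C ∧ v ∉ C)
    (hnm : ∀ C₁ ∈ F', ∀ C₂ ∈ F', ∃ x, x ∈ C₁ ∧ x ∈ C₂ ∧ x ≠ u) :
    F'.card + 3 ≤ X.card := by
  classical
  by_cases hne : F'.Nonempty
  swap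
  · rw [not_nonempty_iff_eq_empty.mp hne]; simp; omega
  obtain ⟨C₀, hC₀⟩ := hne
  have huX : u ∈ X := (h C₀ hC₀).1 (h C₀ hC₀).2.2.1
  have huv : u ≠ v := by
    rintro rfl; exact (h C₀ hC₀).2.2.2 (h C₀ hC₀).2.2.1
  set Y := (X.erase u).erase v with hY
  have hYcard : Y.card = X.card - 2 := by
    rw [hY, card_erase_of_mem (mem_erase.mpr ⟨Ne.symm huv, hvX⟩), card_erase_of_mem huX]
    omega
  set G := F'.image (fun C => C.erase u) with hG
  have hinj : ∀ C₁ ∈ F', ∀ C₂ ∈ F', C₁.erase u = C₂.erase u → C₁ = C₂ := by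
    intro C₁ h₁ C₂ h₂ he
    rw [← insert_erase (h C₁ h₁).2.2.1, ← insert_erase (h C₂ h₂).2.2.1, he]
  have hGcard : G.card = F'.card := by
    rw [hG]
    apply card_image_of_injOn
    intro C₁ h₁ C₂ h₂ he
    exact hinj C₁ h₁ C₂ h₂ he
  have hGbound : G.card + 1 ≤ Y.card := by
    apply graph_lemma G Y (by omega)
    · intro e he
      rw [hG] at he
      obtain ⟨C, hC, rfl⟩ := mem_image.mp he
      constructor
      · intro x hx
        have hxC := mem_of_mem_erase hx
        have hxu : x ≠ u := (mem_erase.mp hx).1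
        have hxv : x ≠ v := by rintro rfl; exact (h C hC).2.2.2 hxC
        exact mem_erase.mpr ⟨hxv, mem_erase.mpr ⟨hxu, (h C hC).1 hxC⟩⟩
      · rw [card_erase_of_mem (h C hC).2.2.1, (h C hC).2.1]
    · intro e he f hf
      rw [hG] at he hf
      obtain ⟨C₁, h₁, rfl⟩ := mem_image.mp he
      obtain ⟨C₂, h₂, rfl⟩ := mem_image.mp hf
      obtain ⟨x, hx₁, hx₂, hxu⟩ := hnm C₁ h₁ C₂ h₂
      exact ⟨x, mem_inter.mpr ⟨mem_erase.mpr ⟨hxu, hx₁⟩, mem_erase.mpr ⟨hxu, hx₂⟩⟩⟩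
  omega

-- both sides have a 2-matching: each side ≤ 4
lemma cross_bound (u v : ℕ) (C₁ C₂ : Finset ℕ)
    (hC₁ : C₁.card = 3 ∧ u ∈ C₁ ∧ v ∉ C₁) (hC₂ : C₂.card = 3 ∧ u ∈ C₂ ∧ v ∉ C₂)
    (hmeet : ∀ x, x ∈ C₁ → x ∈ C₂ → x = u)
    (F' : Finset (Finset ℕ))
    (h : ∀ D ∈ F', D.card = 3 ∧ v ∈ D ∧ u ∉ D ∧ (D ∩ C₁).Nonempty ∧ (D ∩ C₂).Nonempty) :
    F'.card ≤ 4 := by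
  classical
  have hsub : F' ⊆ ((C₁.erase u) ×ˢ (C₂.erase u)).image (fun p => {v, p.1, p.2}) := by
    intro D hD
    obtain ⟨hD3, hvD, huD, hm₁, hm₂⟩ := h D hD
    obtain ⟨x, hx⟩ := hm₁
    obtain ⟨y, hy⟩ := hm₂
    have hxD : x ∈ D := (mem_inter.mp hx).1
    have hxC : x ∈ C₁ := (mem_inter.mp hx).2
    have hyD : y ∈ D := (mem_inter.mp hy).1
    have hyC : y ∈ C₂ := (mem_inter.mp hy).2
    have hxu : x ≠ u := by rintro rfl; exact huD hxD
    have hyu : y ≠ u := by rintro rfl; exact huD hyD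
    have hxy : x ≠ y := by rintro rfl; exact hxu (hmeet x hxC hyC)
    have hxv : x ≠ v := by rintro rfl; exact hC₁.2.2 hxC
    have hyv : y ≠ v := by rintro rfl; exact hC₂.2.2 hyC
    have hsub2 : ({v, x, y} : Finset ℕ) ⊆ D := by
      intro w hw; simp at hw; rcases hw with rfl | rfl | rfl <;> assumption
    have hcard : ({v, x, y} : Finset ℕ).card = 3 :=
      card_eq_three.mpr ⟨v, x, y, Ne.symm hxv, Ne.symm hyv, hxy, rfl⟩
    have hDeq : D = {v, x, y} := (eq_of_subset_of_card_le hsub2 (by omega)).symm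
    exact mem_image.mpr ⟨(x, y), mem_product.mpr ⟨mem_erase.mpr ⟨hxu, hxC⟩, mem_erase.mpr ⟨hyu, hyC⟩⟩, hDeq.symm⟩
  calc F'.card ≤ _ := card_le_card hsub
    _ ≤ ((C₁.erase u) ×ˢ (C₂.erase u)).card := card_image_le
    _ ≤ 4 := by
        rw [card_product, card_erase_of_mem hC₁.2.1, card_erase_of_mem hC₂.2.1, hC₁.1, hC₂.1]

lemma asym_bound (X : Finset ℕ) (hX : 7 ≤ X.card) (u v : ℕ) (huv : u ≠ v)
    (huX : u ∈ X) (hvX : v ∈ X)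
    (Fu Fv : Finset (Finset ℕ))
    (hFu : ∀ C ∈ Fu, C ⊆ X ∧ C.card = 3 ∧ u ∈ C ∧ v ∉ C)
    (hFv : ∀ D ∈ Fv, D ⊆ X ∧ D.card = 3 ∧ v ∈ D ∧ u ∉ D)
    (hcross : ∀ C ∈ Fu, ∀ D ∈ Fv, (C ∩ D).Nonempty)
    (hFvne : Fv.Nonempty)
    (hM1 : ∃ C₁ ∈ Fu, ∃ C₂ ∈ Fu, ∀ x, x ∈ C₁ → x ∈ C₂ → x = u)
    (hnM2 : ∀ D₁ ∈ Fv, ∀ D₂ ∈ Fv, ∃ x, x ∈ D₁ ∧ x ∈ D₂ ∧ x ≠ v) :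
    Fu.card + Fv.card + 5 ≤ 2 * X.card := by
  classical
  obtain ⟨C₁, hC₁, C₂, hC₂, hmeet⟩ := hM1
  obtain ⟨hC₁X, hC₁3, huC₁, hvC₁⟩ := hFu C₁ hC₁
  obtain ⟨hC₂X, hC₂3, huC₂, hvC₂⟩ := hFu C₂ hC₂
  -- elements of links
  have he2 : (C₁.erase u).card = 2 := by rw [card_erase_of_mem huC₁, hC₁3]
  have hf2 : (C₂.erase u).card = 2 := by rw [card_erase_of_mem huC₂, hC₂3]
  obtain ⟨p, q, hpq, hpqE⟩ := card_eq_two.mp he2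
  obtain ⟨r, w, hrw, hrwE⟩ := card_eq_two.mp hf2
  have hpC₁ : p ∈ C₁ := mem_of_mem_erase (hpqE ▸ (by simp : p ∈ ({p, q} : Finset ℕ)))
  have hqC₁ : q ∈ C₁ := mem_of_mem_erase (hpqE ▸ (by simp : q ∈ ({p, q} : Finset ℕ)))
  have hrC₂ : r ∈ C₂ := mem_of_mem_erase (hrwE ▸ (by simp : r ∈ ({r, w} : Finset ℕ)))
  have hwC₂ : w ∈ C₂ := mem_of_mem_erase (hrwE ▸ (by simp : w ∈ ({r, w} : Finset ℕ)))
  have hpu : p ≠ u := (mem_erase.mp (hpqE ▸ (by simp : p ∈ ({p, q} : Finset ℕ)))).1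
  have hqu : q ≠ u := (mem_erase.mp (hpqE ▸ (by simp : q ∈ ({p, q} : Finset ℕ)))).1
  have hru : r ≠ u := (mem_erase.mp (hrwE ▸ (by simp : r ∈ ({r, w} : Finset ℕ)))).1
  have hwu : w ≠ u := (mem_erase.mp (hrwE ▸ (by simp : w ∈ ({r, w} : Finset ℕ)))).1
  have hdist : p ≠ r ∧ p ≠ w ∧ q ≠ r ∧ q ≠ w := by
    refine ⟨?_, ?_, ?_, ?_⟩ <;> rintro rfl
    · exact hpu (hmeet p hpC₁ hrC₂)
    · exact hpu (hmeet p hpC₁ hwC₂)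
    · exact hqu (hmeet q hqC₁ hrC₂)
    · exact hqu (hmeet q hqC₁ hwC₂)
  -- every D in Fv has the form {v, x, y}, x ∈ {p,q}, y ∈ {r,w}
  have hDform : ∀ D ∈ Fv, ∃ x y, x ∈ ({p, q} : Finset ℕ) ∧ y ∈ ({r, w} : Finset ℕ) ∧
      D = {v, x, y} := by
    intro D hD
    obtain ⟨hDX, hD3, hvD, huD⟩ := hFv D hD
    obtain ⟨x, hx⟩ := hcross C₁ hC₁ D hD
    obtain ⟨y, hy⟩ := hcross C₂ hC₂ D hD
    have hxC : x ∈ C₁ := (mem_inter.mp hx).1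
    have hxD : x ∈ D := (mem_inter.mp hx).2
    have hyC : y ∈ C₂ := (mem_inter.mp hy).1
    have hyD : y ∈ D := (mem_inter.mp hy).2
    have hxu : x ≠ u := by rintro rfl; exact huD hxD
    have hyu : y ≠ u := by rintro rfl; exact huD hyD
    have hxpq : x ∈ ({p, q} : Finset ℕ) := by
      have : x ∈ C₁.erase u := mem_erase.mpr ⟨hxu, hxC⟩
      rwa [hpqE] at this
    have hyrw : y ∈ ({r, w} : Finset ℕ) := by
      have : y ∈ C₂.erase u := mem_erase.mpr ⟨hyu, hyC⟩
      rwa [hrwE] at this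
    have hxy : x ≠ y := by rintro rfl; exact hxu (hmeet x hxC hyC)
    have hxv : x ≠ v := by rintro rfl; exact hvC₁ hxC
    have hyv : y ≠ v := by rintro rfl; exact hvC₂ hyC
    have hsub2 : ({v, x, y} : Finset ℕ) ⊆ D := by
      intro z hz; simp at hz; rcases hz with rfl | rfl | rfl <;> assumption
    have hcard : ({v, x, y} : Finset ℕ).card = 3 :=
      card_eq_three.mpr ⟨v, x, y, Ne.symm hxv, Ne.symm hyv, hxy, rfl⟩
    exact ⟨x, y, hxpq, hyrw, (eq_of_subset_of_card_le hsub2 (by omega)).symm⟩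
  -- Fv has at most 2 elements
  have hFv2 : Fv.card ≤ 2 := by
    set s1 : Finset ℕ := {v, p, r}
    set s2 : Finset ℕ := {v, p, w}
    set s3 : Finset ℕ := {v, q, r}
    set s4 : Finset ℕ := {v, q, w}
    have hmem4 : ∀ D ∈ Fv, D = s1 ∨ D = s2 ∨ D = s3 ∨ D = s4 := by
      intro D hD
      obtain ⟨x, y, hx, hy, rfl⟩ := hDform D hD
      simp at hx hy
      rcases hx with rfl | rfl <;> rcases hy with rfl | rfl <;> simp [s1, s2, s3, s4]
    have hvp : v ≠ p := by rintro rfl; exact hvC₁ hpC₁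
    have hvq : v ≠ q := by rintro rfl; exact hvC₁ hqC₁
    have hvr : v ≠ r := by rintro rfl; exact hvC₂ hrC₂
    have hvw : v ≠ w := by rintro rfl; exact hvC₂ hwC₂
    have hcon14 : ¬(s1 ∈ Fv ∧ s4 ∈ Fv) := by
      rintro ⟨h1, h4⟩
      obtain ⟨x, hx1, hx4, hxv⟩ := hnM2 s1 h1 s4 h4
      simp [s1, s4] at hx1 hx4
      rcases hx1 with rfl | rfl | rfl
      · exact hxv rfl
      · rcases hx4 with rfl | rfl | rfl
        · exact hvp rfl
        · exact hpq rfl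
        · exact hdist.2.1 rfl
      · rcases hx4 with rfl | rfl | rfl
        · exact hvr rfl
        · exact hdist.2.2.1 rfl
        · exact hrw rfl
    have hcon23 : ¬(s2 ∈ Fv ∧ s3 ∈ Fv) := by
      rintro ⟨h2, h3⟩
      obtain ⟨x, hx2, hx3, hxv⟩ := hnM2 s2 h2 s3 h3
      simp [s2, s3] at hx2 hx3
      rcases hx2 with rfl | rfl | rfl
      · exact hxv rfl
      · rcases hx3 with rfl | rfl | rfl
        · exact hvp rfl
        · exact hpq rfl
        · exact hdist.1 rfl
      · rcases hx3 with rfl | rfl | rfl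
        · exact hvw rfl
        · exact (hdist.2.2.2 rfl).elim
        · exact hrw rfl.symm
    -- case analysis: Fv is contained in a 2-element collection
    have hsub2 : ∃ t1 t2 : Finset ℕ, Fv ⊆ {t1, t2} := by
      by_cases h1 : s1 ∈ Fv
      · by_cases h2 : s2 ∈ Fv
        · refine ⟨s1, s2, fun D hD => ?_⟩
          rcases hmem4 D hD with rfl | rfl | rfl | rfl
          · simp
          · simp
          · exact absurd ⟨h2, hD⟩ hcon23
          · exact absurd ⟨h1, hD⟩ hcon14
        · refine ⟨s1, s3, fun D hD => ?_⟩
          rcases hmem4 D hD with rfl | rfl | rfl | rfl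
          · simp
          · exact absurd hD h2
          · simp
          · exact absurd ⟨h1, hD⟩ hcon14
      · by_cases h2 : s2 ∈ Fv
        · refine ⟨s2, s4, fun D hD => ?_⟩
          rcases hmem4 D hD with rfl | rfl | rfl | rfl
          · exact absurd hD h1
          · simp
          · exact absurd ⟨h2, hD⟩ hcon23
          · simp
        · refine ⟨s3, s4, fun D hD => ?_⟩
          rcases hmem4 D hD with rfl | rfl | rfl | rfl
          · exact absurd hD h1
          · exact absurd hD h2
          · simp
          · simp
    obtain ⟨t1, t2, hsub⟩ := hsub2
    calc Fv.card ≤ ({t1, t2} : Finset (Finset ℕ)).card := card_le_card hsub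
      _ ≤ 2 := card_insert_le _ _ |>.trans (by simp)
  -- Fu bound via a fixed D₀ ∈ Fv
  obtain ⟨D₀, hD₀⟩ := hFvne
  obtain ⟨z₁, z₂, hz1, hz2, hD₀eq⟩ := hDform D₀ hD₀
  have hz12 : z₁ ≠ z₂ := by
    simp at hz1 hz2
    rcases hz1 with rfl | rfl <;> rcases hz2 with rfl | rfl
    · exact hdist.1
    · exact hdist.2.1
    · exact hdist.2.2.1
    · exact hdist.2.2.2
  have hz1D : z₁ ∈ D₀ := by rw [hD₀eq]; simp
  have hz2D : z₂ ∈ D₀ := by rw [hD₀eq]; simp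
  have hz1X : z₁ ∈ X := (hFv D₀ hD₀).1 hz1D
  have hz2X : z₂ ∈ X := (hFv D₀ hD₀).1 hz2D
  have hz1u : z₁ ≠ u := by rintro rfl; exact (hFv D₀ hD₀).2.2.2 hz1D
  have hz2u : z₂ ≠ u := by rintro rfl; exact (hFv D₀ hD₀).2.2.2 hz2D
  have hz1v : z₁ ≠ v := by
    simp at hz1; rcases hz1 with rfl | rfl
    · rintro rfl; exact hvC₁ hpC₁
    · rintro rfl; exact hvC₁ hqC₁
  have hz2v : z₂ ≠ v := by
    simp at hz2; rcases hz2 with rfl | rfl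
    · rintro rfl; exact hvC₂ hrC₂
    · rintro rfl; exact hvC₂ hwC₂
  -- every C in Fu contains z₁ or z₂
  have hFuz : ∀ C ∈ Fu, z₁ ∈ C ∨ z₂ ∈ C := by
    intro C hC
    obtain ⟨x, hx⟩ := hcross C hC D₀ hD₀
    have hxC : x ∈ C := (mem_inter.mp hx).1
    have hxD : x ∈ D₀ := (mem_inter.mp hx).2
    rw [hD₀eq] at hxD; simp at hxD
    rcases hxD with rfl | rfl | rfl
    · exact absurd hxC (hFu C hC).2.2.2
    · exact Or.inl hxC
    · exact Or.inr hxC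
  -- count Fu
  set Y4 := (((X.erase u).erase v).erase z₁).erase z₂ with hY4
  have hY4card : Y4.card = X.card - 4 := by
    rw [hY4]
    rw [card_erase_of_mem, card_erase_of_mem, card_erase_of_mem, card_erase_of_mem huX]
    · omega
    · exact mem_erase.mpr ⟨Ne.symm huv, hvX⟩
    · exact mem_erase.mpr ⟨hz1v, mem_erase.mpr ⟨hz1u, hz1X⟩⟩
    · exact mem_erase.mpr ⟨hz12.symm, mem_erase.mpr ⟨hz2v, mem_erase.mpr ⟨hz2u, hz2X⟩⟩⟩
  classical
  set Fuw := Fu.filter (fun C => z₁ ∈ C ∧ z₂ ∈ C) with hFuw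
  set Fu1 := Fu.filter (fun C => z₁ ∈ C ∧ z₂ ∉ C) with hFu1
  set Fu2 := Fu.filter (fun C => z₁ ∉ C ∧ z₂ ∈ C) with hFu2
  have hFusplit : Fu ⊆ Fuw ∪ Fu1 ∪ Fu2 := by
    intro C hC
    rcases hFuz C hC with h1 | h2 <;> by_cases hz : z₂ ∈ C <;>
      by_cases hz' : z₁ ∈ C <;> simp [hFuw, hFu1, hFu2, hC] <;> tauto
  have hFuwcard : Fuw.card ≤ 1 := by
    have : ∀ C ∈ Fuw, C = {u, z₁, z₂} := by
      intro C hC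
      obtain ⟨hCF, hz1C, hz2C⟩ := mem_filter.mp hC
      obtain ⟨hCX, hC3, huC, hvC⟩ := hFu C hCF
      have hsub2 : ({u, z₁, z₂} : Finset ℕ) ⊆ C := by
        intro x hx; simp at hx; rcases hx with rfl | rfl | rfl <;> assumption
      have hcard : ({u, z₁, z₂} : Finset ℕ).card = 3 :=
        card_eq_three.mpr ⟨u, z₁, z₂, Ne.symm hz1u, Ne.symm hz2u, hz12, rfl⟩
      exact (eq_of_subset_of_card_le hsub2 (by omega)).symm
    by_cases hne : Fuw.Nonempty
    · obtain ⟨C, hC⟩ := hne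
      have hsub : Fuw ⊆ {({u, z₁, z₂} : Finset ℕ)} := fun D hD => by
        simp [this D hD]
      calc Fuw.card ≤ _ := card_le_card hsub
        _ = 1 := card_singleton _
    · rw [not_nonempty_iff_eq_empty.mp hne]; simp
  have hFu1card : Fu1.card ≤ X.card - 4 := by
    rw [← hY4card]
    apply card_le_of_maps Fu1 Y4 (fun t => {u, z₁, t})
    intro C hC
    obtain ⟨hCF, hz1C, hz2C⟩ := mem_filter.mp hC
    obtain ⟨hCX, hC3, huC, hvC⟩ := hFu C hCF
    obtain ⟨t, htu, htz, hCeq⟩ := triple_struct2 C hC3 u z₁ huC hz1C (Ne.symm hz1u)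
    have htC : t ∈ C := by rw [hCeq]; simp
    refine ⟨t, ?_, hCeq⟩
    rw [hY4]
    refine mem_erase.mpr ⟨?_, mem_erase.mpr ⟨htz, mem_erase.mpr ⟨?_, mem_erase.mpr ⟨htu, hCX htC⟩⟩⟩⟩
    · rintro rfl; exact hz2C htC
    · rintro rfl; exact hvC htC
  have hFu2card : Fu2.card ≤ X.card - 4 := by
    rw [← hY4card]
    apply card_le_of_maps Fu2 Y4 (fun t => {u, z₂, t})
    intro C hC
    obtain ⟨hCF, hz1C, hz2C⟩ := mem_filter.mp hC
    obtain ⟨hCX, hC3, huC, hvC⟩ := hFu C hCF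
    obtain ⟨t, htu, htz, hCeq⟩ := triple_struct2 C hC3 u z₂ huC hz2C (Ne.symm hz2u)
    have htC : t ∈ C := by rw [hCeq]; simp
    refine ⟨t, ?_, hCeq⟩
    rw [hY4]
    refine mem_erase.mpr ⟨htz, mem_erase.mpr ⟨?_, mem_erase.mpr ⟨?_, mem_erase.mpr ⟨htu, hCX htC⟩⟩⟩⟩
    · rintro rfl; exact hz1C htC
    · rintro rfl; exact hvC htC
  have hFucard : Fu.card ≤ 2 * X.card - 7 := by
    have h1 := card_le_card hFusplit
    have h2 := card_union_le (Fuw ∪ Fu1) Fu2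
    have h3 := card_union_le Fuw Fu1
    omega
  omega

lemma tau2 (X : Finset ℕ) (hX : 7 ≤ X.card) (F : Finset (Finset ℕ))
    (hF : ∀ C ∈ F, C ⊆ X ∧ C.card = 3)
    (hI : ∀ C ∈ F, ∀ D ∈ F, (C ∩ D).Nonempty)
    (hns : ∀ x, ∃ C ∈ F, x ∉ C)
    (u v : ℕ) (hcov : ∀ C ∈ F, u ∈ C ∨ v ∈ C) :
    F.card + 7 ≤ 3 * X.card := by
  classical
  obtain ⟨T, hT, hvT⟩ := hns v
  have huT : u ∈ T := (hcov T hT).resolve_right hvT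
  obtain ⟨S, hS, huS⟩ := hns u
  have hvS : v ∈ S := (hcov S hS).resolve_left huS
  have huv : u ≠ v := by rintro rfl; exact huS hvS
  have huX : u ∈ X := (hF T hT).1 huT
  have hvX : v ∈ X := (hF S hS).1 hvS
  set Fuv := F.filter (fun C => u ∈ C ∧ v ∈ C) with hFuv
  set Fu := F.filter (fun C => u ∈ C ∧ v ∉ C) with hFu
  set Fv := F.filter (fun C => u ∉ C ∧ v ∈ C) with hFv
  have hsplit : F ⊆ Fuv ∪ Fu ∪ Fv := by
    intro C hC
    rcases hcov C hC with h | h <;> by_cases h' : v ∈ C <;> by_cases h'' : u ∈ C <;>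
      simp [hFuv, hFu, hFv, hC] <;> tauto
  have hTFu : T ∈ Fu := mem_filter.mpr ⟨hT, huT, hvT⟩
  have hSFv : S ∈ Fv := mem_filter.mpr ⟨hS, huS, hvS⟩
  have hFuprop : ∀ C ∈ Fu, C ⊆ X ∧ C.card = 3 ∧ u ∈ C ∧ v ∉ C := by
    intro C hC
    obtain ⟨h1, h2, h3⟩ := mem_filter.mp hC
    exact ⟨(hF C h1).1, (hF C h1).2, h2, h3⟩
  have hFvprop : ∀ C ∈ Fv, C ⊆ X ∧ C.card = 3 ∧ v ∈ C ∧ u ∉ C := by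
    intro C hC
    obtain ⟨h1, h2, h3⟩ := mem_filter.mp hC
    exact ⟨(hF C h1).1, (hF C h1).2, h3, h2⟩
  have hFuvcard : Fuv.card + 2 ≤ X.card := by
    have h1 : Fuv.card ≤ ((X.erase u).erase v).card := by
      apply card_le_of_maps Fuv _ (fun z => {u, v, z})
      intro C hC
      obtain ⟨h1, h2, h3⟩ := mem_filter.mp hC
      obtain ⟨z, hzu, hzv, hCeq⟩ := triple_struct2 C (hF C h1).2 u v h2 h3 huv
      have hzC : z ∈ C := by rw [hCeq]; simp
      exact ⟨z, mem_erase.mpr ⟨hzv, mem_erase.mpr ⟨hzu, (hF C h1).1 hzC⟩⟩, hCeq⟩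
    rw [card_erase_of_mem (mem_erase.mpr ⟨Ne.symm huv, hvX⟩), card_erase_of_mem huX] at h1
    omega
  have hcrossuv : ∀ C ∈ Fu, ∀ D ∈ Fv, (C ∩ D).Nonempty := by
    intro C hC D hD
    exact hI C (mem_filter.mp hC).1 D (mem_filter.mp hD).1
  -- the two matching propositions
  by_cases hM1 : ∃ C₁ ∈ Fu, ∃ C₂ ∈ Fu, ∀ x, x ∈ C₁ → x ∈ C₂ → x = u
  · by_cases hM2 : ∃ D₁ ∈ Fv, ∃ D₂ ∈ Fv, ∀ x, x ∈ D₁ → x ∈ D₂ → x = v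
    · -- both matchings: each side ≤ 4
      obtain ⟨C₁, hC₁, C₂, hC₂, hmeet1⟩ := hM1
      obtain ⟨D₁, hD₁, D₂, hD₂, hmeet2⟩ := hM2
      have hFv4 : Fv.card ≤ 4 := by
        apply cross_bound u v C₁ C₂
          ⟨(hFuprop C₁ hC₁).2.1, (hFuprop C₁ hC₁).2.2.1, (hFuprop C₁ hC₁).2.2.2⟩
          ⟨(hFuprop C₂ hC₂).2.1, (hFuprop C₂ hC₂).2.2.1, (hFuprop C₂ hC₂).2.2.2⟩ hmeet1 Fv
        intro D hD
        exact ⟨(hFvprop D hD).2.1, (hFvprop D hD).2.2.1, (hFvprop D hD).2.2.2,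
          (inter_comm C₁ D ▸ hcrossuv C₁ hC₁ D hD),
          (inter_comm C₂ D ▸ hcrossuv C₂ hC₂ D hD)⟩
      have hFu4 : Fu.card ≤ 4 := by
        apply cross_bound v u D₁ D₂
          ⟨(hFvprop D₁ hD₁).2.1, (hFvprop D₁ hD₁).2.2.1, (hFvprop D₁ hD₁).2.2.2⟩
          ⟨(hFvprop D₂ hD₂).2.1, (hFvprop D₂ hD₂).2.2.1, (hFvprop D₂ hD₂).2.2.2⟩ hmeet2 Fu
        intro C hC
        exact ⟨(hFuprop C hC).2.1, (hFuprop C hC).2.2.1, (hFuprop C hC).2.2.2,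
          hcrossuv C hC D₁ hD₁, hcrossuv C hC D₂ hD₂⟩
      have h1 := card_le_card hsplit
      have h2 := card_union_le (Fuv ∪ Fu) Fv
      have h3 := card_union_le Fuv Fu
      omega
    · -- M1, not M2
      push_neg at hM2
      have hasym := asym_bound X hX u v huv huX hvX Fu Fv hFuprop hFvprop hcrossuv
        ⟨S, hSFv⟩ hM1 ?_
      · have h1 := card_le_card hsplit
        have h2 := card_union_le (Fuv ∪ Fu) Fv
        have h3 := card_union_le Fuv Fu
        omega
      · intro D₁ h₁ D₂ h₂
        obtain ⟨x, hx₁, hx₂, hxv⟩ := hM2 D₁ h₁ D₂ h₂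
        exact ⟨x, hx₁, hx₂, hxv⟩
  · -- not M1 : Fu links pairwise intersecting
    push_neg at hM1
    have hFunb : Fu.card + 3 ≤ X.card := by
      apply nomatch_bound X hX u v hvX Fu hFuprop
      intro C₁ h₁ C₂ h₂
      obtain ⟨x, hx₁, hx₂, hxu⟩ := hM1 C₁ h₁ C₂ h₂
      exact ⟨x, hx₁, hx₂, hxu⟩
    by_cases hM2 : ∃ D₁ ∈ Fv, ∃ D₂ ∈ Fv, ∀ x, x ∈ D₁ → x ∈ D₂ → x = v
    · -- M2, not M1 : symmetric asym
      have hasym := asym_bound X hX v u (Ne.symm huv) hvX huX Fv Fu hFvprop hFuprop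
        (fun D hD C hC => inter_comm C D ▸ hcrossuv C hC D hD) ⟨T, hTFu⟩ hM2 ?_
      · have h1 := card_le_card hsplit
        have h2 := card_union_le (Fuv ∪ Fu) Fv
        have h3 := card_union_le Fuv Fu
        omega
      · intro C₁ h₁ C₂ h₂
        obtain ⟨x, hx₁, hx₂, hxu⟩ := hM1 C₁ h₁ C₂ h₂
        exact ⟨x, hx₁, hx₂, hxu⟩
    · -- neither: both star/triangle
      push_neg at hM2
      have hFvnb : Fv.card + 3 ≤ X.card := by
        apply nomatch_bound X hX v u huX Fv hFvprop
        intro D₁ h₁ D₂ h₂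
        obtain ⟨x, hx₁, hx₂, hxv⟩ := hM2 D₁ h₁ D₂ h₂
        exact ⟨x, hx₁, hx₂, hxv⟩
      have h1 := card_le_card hsplit
      have h2 := card_union_le (Fuv ∪ Fu) Fv
      have h3 := card_union_le Fuv Fu
      omega

-- Hilton-Milner type bound for non-star intersecting 3-uniform families
lemma HM (X : Finset ℕ) (hX : 7 ≤ X.card) (F : Finset (Finset ℕ))
    (hF : ∀ C ∈ F, C ⊆ X ∧ C.card = 3)
    (hI : ∀ C ∈ F, ∀ D ∈ F, (C ∩ D).Nonempty)
    (hns : ∀ x, ∃ C ∈ F, x ∉ C) :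
    F.card + 7 ≤ 3 * X.card := by
  by_cases hcov : ∃ u v : ℕ, ∀ C ∈ F, u ∈ C ∨ v ∈ C
  · obtain ⟨u, v, h⟩ := hcov
    exact tau2 X hX F hF hI hns u v h
  · push_neg at hcov
    have h13 := tau3 F (fun C hC => (hF C hC).2) hI ?_
    · omega
    · exact hcov

-- main induction
lemma main_induction : ∀ m : ℕ, 1 ≤ m → ∀ X : Finset ℕ, m + 5 ≤ X.card →
    ∀ c : Finset ℕ → ℕ, (∀ A ⊆ X, A.card = 3 → c A < m) →
    ∃ A B : Finset ℕ, A ⊆ X ∧ B ⊆ X ∧ A.card = 3 ∧ B.card = 3 ∧ Disjoint A B ∧ c A = c B := by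
  intro m
  induction m with
  | zero => omega
  | succ m ih =>
    intro _ X hX c hc
    by_cases hm : m = 0
    · -- one color: pick two disjoint triples
      subst hm
      obtain ⟨Y, hYX, hY6⟩ := Finset.exists_subset_card_eq (show 6 ≤ X.card by omega)
      obtain ⟨A, hAY, hA3⟩ := Finset.exists_subset_card_eq (show 3 ≤ Y.card by omega)
      set B := Y \ A with hB
      have hBY : B ⊆ Y := sdiff_subset
      have hB3 : B.card = 3 := by rw [hB, card_sdiff_of_subset hAY, hY6, hA3]
      have hAX : A ⊆ X := hAY.trans hYX
      have hBX : B ⊆ X := hBY.trans hYX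
      have hd : Disjoint A B := disjoint_sdiff
      have hcA := hc A hAX hA3
      have hcB := hc B hBX hB3
      exact ⟨A, B, hAX, hBX, hA3, hB3, hd, by omega⟩
    · have hm1 : 1 ≤ m := by omega
      by_cases hpeel : ∃ j ≤ m, ∃ x ∈ X, ∀ A ⊆ X.erase x, A.card = 3 → c A ≠ j
      · -- peel a star color class
        obtain ⟨j, hj, x, hxX, hxj⟩ := hpeel
        set c' := fun A => if c A = m then j else c A with hc'
        have hc'range : ∀ A ⊆ X.erase x, A.card = 3 → c' A < m := by
          intro A hA h3
          have hAX : A ⊆ X := hA.trans (erase_subset x X)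
          have := hc A hAX h3
          have hAj := hxj A hA h3
          rw [hc']
          by_cases hAm : c A = m
          · simp [hAm]; omega
          · simp [hAm]; omega
        have hcard' : m + 5 ≤ (X.erase x).card := by
          rw [card_erase_of_mem hxX]; omega
        obtain ⟨A, B, hAX, hBX, hA3, hB3, hd, hcc⟩ := ih hm1 (X.erase x) hcard' c' hc'range
        refine ⟨A, B, hAX.trans (erase_subset x X), hBX.trans (erase_subset x X),
          hA3, hB3, hd, ?_⟩
        rw [hc'] at hcc
        simp only at hcc
        by_cases hAm : c A = m <;> by_cases hBm : c B = m
        · rw [hAm, hBm]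
        · simp [hAm, hBm] at hcc
          exact absurd hcc.symm (hxj B hBX hB3)
        · simp [hAm, hBm] at hcc
          exact absurd hcc (hxj A hAX hA3)
        · simpa [hAm, hBm] using hcc
      · -- counting case
        push_neg at hpeel
        by_contra hno
        push_neg at hno
        classical
        set n := X.card with hn
        have hn7 : 7 ≤ n := by omega
        -- the color classes
        set Fc := fun j => (X.powersetCard 3).filter (fun A => c A = j) with hFc
        have hcover : X.powersetCard 3 ⊆ (range (m+1)).biUnion Fc := by
          intro A hA
          obtain ⟨hAX, hA3⟩ := mem_powersetCard.mp hA
          refine mem_biUnion.mpr ⟨c A, mem_range.mpr (hc A hAX hA3), ?_⟩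
          rw [hFc]; exact mem_filter.mpr ⟨hA, rfl⟩
        have hsum : n.choose 3 ≤ ∑ j ∈ range (m+1), (Fc j).card := by
          calc n.choose 3 = (X.powersetCard 3).card := (card_powersetCard 3 X).symm
            _ ≤ ((range (m+1)).biUnion Fc).card := card_le_card hcover
            _ ≤ ∑ j ∈ range (m+1), (Fc j).card := card_biUnion_le
        -- each class obeys the HM bound
        have hclass : ∀ j ∈ range (m+1), (Fc j).card ≤ 3 * n - 7 := by
          intro j hj
          have hj' : j ≤ m := by
            have := mem_range.mp hj
            omega
          have hb := HM X hn7 (Fc j) ?_ ?_ ?_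
          · omega
          · intro C hC
            rw [hFc] at hC
            exact mem_powersetCard.mp (mem_filter.mp hC).1
          · intro C hC D hD
            rw [hFc] at hC hD
            obtain ⟨hC1, hC2⟩ := mem_filter.mp hC
            obtain ⟨hD1, hD2⟩ := mem_filter.mp hD
            obtain ⟨hCX, hC3⟩ := mem_powersetCard.mp hC1
            obtain ⟨hDX, hD3⟩ := mem_powersetCard.mp hD1
            by_contra hne
            rw [not_nonempty_iff_eq_empty] at hne
            have hdisj : Disjoint C D := disjoint_iff_inter_eq_empty.mpr hne
            exact hno C D hCX hDX hC3 hD3 hdisj (hC2.trans hD2.symm)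
          · intro x
            by_cases hxX : x ∈ X
            · obtain ⟨A, hA1, hA2, hA3⟩ := hpeel j hj' x hxX
              refine ⟨A, ?_, fun hmem => (mem_erase.mp (hA1 hmem)).1 rfl⟩
              rw [hFc]
              exact mem_filter.mpr ⟨mem_powersetCard.mpr ⟨hA1.trans (erase_subset x X), hA2⟩, hA3⟩
            · have hXne : X.Nonempty := card_pos.mp (by omega)
              obtain ⟨x₀, hx₀⟩ := hXne
              obtain ⟨A, hA1, hA2, hA3⟩ := hpeel j hj' x₀ hx₀
              refine ⟨A, ?_, fun hmem => hxX ((hA1.trans (erase_subset x₀ X)) hmem)⟩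
              rw [hFc]
              exact mem_filter.mpr ⟨mem_powersetCard.mpr ⟨hA1.trans (erase_subset x₀ X), hA2⟩, hA3⟩
        have hsum2 : ∑ j ∈ range (m+1), (Fc j).card ≤ (m+1) * (3 * n - 7) := by
          calc ∑ j ∈ range (m+1), (Fc j).card ≤ ∑ j ∈ range (m+1), (3 * n - 7) :=
              Finset.sum_le_sum hclass
            _ = (m+1) * (3 * n - 7) := by rw [Finset.sum_const, card_range, smul_eq_mul]
        have hmn : m + 1 ≤ n - 5 := by omega
        have hfinal : (m+1) * (3 * n - 7) ≤ (n - 5) * (3 * n - 7) :=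
          Nat.mul_le_mul_right _ hmn
        have := arith n hn7
        omega

theorem kneser_lovasz_k3 (n : ℕ) (hn : 7 ≤ n) (c : Finset ℕ → ℕ)
    (hc : ∀ A ⊆ Finset.Icc 1 n, A.card = 3 → c A ∈ Finset.Icc 1 (n - 5)) :
    ∃ A B : Finset ℕ, A ⊆ Finset.Icc 1 n ∧ B ⊆ Finset.Icc 1 n ∧
      A.card = 3 ∧ B.card = 3 ∧ Disjoint A B ∧ c A = c B := by
  have hcard : (Finset.Icc 1 n).card = n := by rw [Nat.card_Icc]; omega
  have hm : (n - 5) + 5 ≤ (Finset.Icc 1 n).card := by omega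
  obtain ⟨A, B, hAX, hBX, hA3, hB3, hd, hcc⟩ :=
    main_induction (n - 5) (by omega) (Finset.Icc 1 n) hm (fun A => c A - 1)
      (fun A hA h3 => by show c A - 1 < n - 5; have := Finset.mem_Icc.mp (hc A hA h3); omega)
  refine ⟨A, B, hAX, hBX, hA3, hB3, hd, ?_⟩
  have h1 := Finset.mem_Icc.mp (hc A hAX hA3)
  have h2 := Finset.mem_Icc.mp (hc B hBX hB3)
  
  omega
end

section
/- With n ≥ 7, F = c⁻¹(λ) a family of 3-subsets of {1,...,n} containing {a,b,c}, and A, B, C, D as above: if |A| ≥ |B| ≥ |C|, then either F contains two disjoint sets, or |C| + |D| ≤ n - 2. -/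
open Finset

lemma extract3 {Z : Finset ℕ} (hZ : Z.card = 3) {x y : ℕ} (hx : x ∈ Z) (hy : y ∈ Z)
    (hxy : x ≠ y) : ∃ z ∈ Z, z ≠ x ∧ z ≠ y ∧ Z = {x, y, z} := by
  have hsub : ({x, y} : Finset ℕ) ⊆ Z := by
    intro t ht
    rcases mem_insert.mp ht with rfl | ht
    · exact hx
    · rcases mem_singleton.mp ht with rfl; exact hy
  have hc2 : ({x, y} : Finset ℕ).card = 2 := by
    rw [card_insert_of_notMem (by simp [hxy]), card_singleton]
  have h1 : (Z \ {x, y}).card = 1 := by rw [card_sdiff_of_subset hsub, hZ, hc2]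
  obtain ⟨z, hzeq⟩ := card_eq_one.mp h1
  have hz : z ∈ Z \ ({x, y} : Finset ℕ) := by rw [hzeq]; exact mem_singleton_self z
  rw [mem_sdiff, mem_insert, mem_singleton] at hz
  push_neg at hz
  obtain ⟨hzZ, hzx, hzy⟩ := hz
  refine ⟨z, hzZ, hzx, hzy, ?_⟩
  refine (eq_of_subset_of_card_le ?_ ?_).symm
  · intro t ht
    rcases mem_insert.mp ht with rfl | ht
    · exact hx
    rcases mem_insert.mp ht with rfl | ht
    · exact hy
    rcases mem_singleton.mp ht with rfl
    exact hzZ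
  · rw [hZ, card_insert_of_notMem (by simp [hxy, hzx.symm]),
      card_insert_of_notMem (by simp [hzy.symm]), card_singleton]

lemma extract_pair {Z : Finset ℕ} (hZ : Z.card = 3) {x : ℕ} (hx : x ∈ Z) :
    ∃ p q, p ≠ q ∧ p ∈ Z ∧ q ∈ Z ∧ p ≠ x ∧ q ≠ x ∧ Z = {x, p, q} := by
  have he : (Z.erase x).card = 2 := by rw [card_erase_of_mem hx, hZ]
  obtain ⟨p, q, hpq, heq⟩ := card_eq_two.mp he
  have hp : p ∈ Z.erase x := by rw [heq]; simp
  have hq : q ∈ Z.erase x := by rw [heq]; simp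
  refine ⟨p, q, hpq, mem_of_mem_erase hp, mem_of_mem_erase hq,
    ne_of_mem_erase hp, ne_of_mem_erase hq, ?_⟩
  rw [show ({x, p, q} : Finset ℕ) = insert x ({p, q} : Finset ℕ) from rfl, ← heq,
    insert_erase hx]

lemma card_le_of_fixed_pair (S : Finset (Finset ℕ)) (T : Finset ℕ) (r s : ℕ)
    (h : ∀ W ∈ S, ∃ t ∈ T, W = {r, s, t}) : S.card ≤ T.card := by
  calc S.card ≤ (T.image fun t => ({r, s, t} : Finset ℕ)).card := by
        refine card_le_card fun W hW => ?_
        obtain ⟨t, ht, rfl⟩ := h W hW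
        exact mem_image_of_mem _ ht
    _ ≤ T.card := card_image_le

set_option maxHeartbeats 1600000 in
theorem lemma_cd (n : ℕ) (hn : 7 ≤ n) (a b c : ℕ) (F : Finset (Finset ℕ))
    (hmem : ∀ W ∈ F, W ⊆ Finset.Icc 1 n ∧ W.card = 3)
    (habc : ({a, b, c} : Finset ℕ) ∈ F)
    (FA FB FC FD : Finset (Finset ℕ))
    (hFA : FA = F.filter (fun W => a ∈ W ∧ b ∉ W))
    (hFB : FB = F.filter (fun W => a ∉ W ∧ b ∈ W))
    (hFC : FC = F.filter (fun W => c ∈ W ∧ a ∉ W ∧ b ∉ W))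
    (hFD : FD = F.filter (fun W => a ∈ W ∧ b ∈ W))
    (hAB : FB.card ≤ FA.card) (hBC : FC.card ≤ FB.card) :
    (∃ W ∈ F, ∃ Z ∈ F, Disjoint W Z) ∨
    FC.card + FD.card ≤ n - 2 := by
  by_cases hdisj : ∃ W ∈ F, ∃ Z ∈ F, Disjoint W Z
  · exact Or.inl hdisj
  right
  push_neg at hdisj
  have hInt : ∀ W ∈ F, ∀ Z ∈ F, ∃ t, t ∈ W ∧ t ∈ Z := fun W hW Z hZ =>
    Finset.not_disjoint_iff.mp (hdisj W hW Z hZ)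
  obtain ⟨habc_sub, habc_card⟩ := hmem _ habc
  -- distinctness of a b c
  have hab : a ≠ b := by
    rintro rfl
    rw [Finset.insert_idem] at habc_card
    have := Finset.card_insert_le a ({c} : Finset ℕ)
    simp at this; omega
  have hac : a ≠ c := by
    rintro rfl
    have he : ({a, b, a} : Finset ℕ) = {a, b} := by ext t; simp; tauto
    rw [he] at habc_card
    have := Finset.card_insert_le a ({b} : Finset ℕ)
    simp at this; omega
  have hbc : b ≠ c := by
    rintro rfl
    have he : ({a, b, b} : Finset ℕ) = {a, b} := by ext t; simp
    rw [he] at habc_card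
    have := Finset.card_insert_le a ({b} : Finset ℕ)
    simp at this; omega
  have haI : a ∈ Icc 1 n := habc_sub (by simp)
  have hbI : b ∈ Icc 1 n := habc_sub (by simp)
  have hcI : c ∈ Icc 1 n := habc_sub (by simp)
  have hIccCard : (Icc 1 n).card = n := by simp
  have hAF : FA ⊆ F := by rw [hFA]; exact filter_subset _ _
  have hBF : FB ⊆ F := by rw [hFB]; exact filter_subset _ _
  have hCF : FC ⊆ F := by rw [hFC]; exact filter_subset _ _
  have hDF : FD ⊆ F := by rw [hFD]; exact filter_subset _ _
  -- structure of FD elements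
  have hDstruct : ∀ Z ∈ FD, ∃ z ∈ Icc 1 n, z ≠ a ∧ z ≠ b ∧ Z = {a, b, z} := by
    intro Z hZ
    rw [hFD, mem_filter] at hZ
    obtain ⟨hZF, haZ, hbZ⟩ := hZ
    obtain ⟨hZI, hZ3⟩ := hmem Z hZF
    obtain ⟨z, hzZ, hza, hzb, hEq⟩ := extract3 hZ3 haZ hbZ hab
    exact ⟨z, hZI hzZ, hza, hzb, hEq⟩
  -- FC element facts
  have hCfacts : ∀ W ∈ FC, c ∈ W ∧ a ∉ W ∧ b ∉ W ∧ W.card = 3 ∧ W ⊆ Icc 1 n := by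
    intro W hW
    rw [hFC, mem_filter] at hW
    obtain ⟨hWF, h1, h2, h3⟩ := hW
    exact ⟨h1, h2, h3, (hmem W hWF).2, (hmem W hWF).1⟩
  by_cases hCe : FC = ∅
  · -- no C sets : |D| ≤ n - 2
    rw [hCe, Finset.card_empty, zero_add]
    have hdb : FD.card ≤ ((Icc 1 n) \ {a, b}).card := by
      refine card_le_of_fixed_pair FD _ a b fun Z hZ => ?_
      obtain ⟨z, hzI, hza, hzb, hEq⟩ := hDstruct Z hZ
      exact ⟨z, mem_sdiff.mpr ⟨hzI, by simp [hza, hzb]⟩, hEq⟩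
    have hsub : ({a, b} : Finset ℕ) ⊆ Icc 1 n := by
      intro t ht; rcases mem_insert.mp ht with rfl | ht
      · exact haI
      · rcases mem_singleton.mp ht with rfl; exact hbI
    have : ((Icc 1 n) \ {a, b}).card = n - 2 := by
      rw [card_sdiff_of_subset hsub, hIccCard, card_insert_of_notMem (by simp [hab]), card_singleton]
    omega
  obtain ⟨W0, hW0⟩ := nonempty_iff_ne_empty.mpr hCe
  have hW0F : W0 ∈ F := hCF hW0
  -- every D set's third element is in every C set
  have hHit : ∀ W ∈ FC, ∀ Z ∈ FD, ∀ z : ℕ, Z = {a, b, z} → z ∈ W := by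
    intro W hW Z hZ z hZeq
    obtain ⟨hcW, haW, hbW, -, -⟩ := hCfacts W hW
    obtain ⟨t, htW, htZ⟩ := hInt W (hCF hW) Z (hDF hZ)
    rw [hZeq] at htZ
    rcases mem_insert.mp htZ with rfl | htZ
    · exact absurd htW haW
    rcases mem_insert.mp htZ with rfl | htZ
    · exact absurd htW hbW
    rcases mem_singleton.mp htZ with rfl
    exact htW
  have habcD : ({a, b, c} : Finset ℕ) ∈ FD := by
    rw [hFD, mem_filter]; exact ⟨habc, by simp, by simp⟩
  have hD1 : 1 ≤ FD.card := card_pos.mpr ⟨_, habcD⟩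
  have hD3 : FD.card ≤ 3 := by
    calc FD.card ≤ (W0.image fun z => ({a, b, z} : Finset ℕ)).card := by
          refine card_le_card fun Z hZ => ?_
          obtain ⟨z, -, -, -, hEq⟩ := hDstruct Z hZ
          have hzW : z ∈ W0 := hHit W0 hW0 Z hZ z hEq
          rw [hEq]; exact mem_image_of_mem _ hzW
      _ ≤ W0.card := card_image_le
      _ = 3 := (hmem W0 hW0F).2
  -- uniqueness of third element
  have huniq : ∀ z z' : ℕ, z ≠ a → z ≠ b → ({a, b, z} : Finset ℕ) = {a, b, z'} → z = z' := by
    intro z z' hza hzb hEq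
    have : z ∈ ({a, b, z'} : Finset ℕ) := by rw [← hEq]; simp
    rcases mem_insert.mp this with rfl | h
    · exact absurd rfl hza
    rcases mem_insert.mp h with rfl | h
    · exact absurd rfl hzb
    exact mem_singleton.mp h
  have hdcases : FD.card = 1 ∨ FD.card = 2 ∨ FD.card = 3 := by omega
  rcases hdcases with hd | hd | hd
  · -- |D| = 1 : show |C| ≤ n - 3
    suffices hCle : FC.card ≤ n - 3 by omega
    by_contra hC
    push_neg at hC
    have hCge : n - 2 ≤ FC.card := by omega
    have hBge : n - 2 ≤ FB.card := le_trans hCge hBC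
    have hAge : n - 2 ≤ FA.card := le_trans hBge hAB
    -- a set in FB avoiding c
    have hBsetI : ∀ Z ∈ FB, a ∉ Z ∧ b ∈ Z ∧ Z.card = 3 ∧ Z ⊆ Icc 1 n := by
      intro Z hZ
      rw [hFB, mem_filter] at hZ
      exact ⟨hZ.2.1, hZ.2.2, (hmem Z hZ.1).2, (hmem Z hZ.1).1⟩
    have hsub3 : ({a, b, c} : Finset ℕ) ⊆ Icc 1 n := habc_sub
    have hcard3sd : ((Icc 1 n) \ {a, b, c}).card = n - 3 := by
      rw [card_sdiff_of_subset hsub3, hIccCard, habc_card]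
    obtain ⟨Z0, hZ0B, hcZ0⟩ : ∃ Z0 ∈ FB, c ∉ Z0 := by
      by_contra hall
      push_neg at hall
      have : FB.card ≤ ((Icc 1 n) \ {a, b, c}).card := by
        refine card_le_of_fixed_pair FB _ b c fun Z hZ => ?_
        obtain ⟨haZ, hbZ, hZ3, hZI⟩ := hBsetI Z hZ
        obtain ⟨w, hwZ, hwb, hwc, hEq⟩ := extract3 hZ3 hbZ (hall Z hZ) hbc
        refine ⟨w, mem_sdiff.mpr ⟨hZI hwZ, ?_⟩, hEq⟩
        simp only [mem_insert, mem_singleton]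
        push_neg
        exact ⟨fun h => haZ (h ▸ hwZ), hwb, hwc⟩
      omega
    obtain ⟨haZ0, hbZ0, hZ03, hZ0I⟩ := hBsetI Z0 hZ0B
    obtain ⟨u, v, huv, huZ0, hvZ0, hub, hvb, hZ0eq⟩ := extract_pair hZ03 hbZ0
    have hua : u ≠ a := fun h => haZ0 (h ▸ huZ0)
    have hva : v ≠ a := fun h => haZ0 (h ▸ hvZ0)
    have huc : u ≠ c := fun h => hcZ0 (h ▸ huZ0)
    have hvc : v ≠ c := fun h => hcZ0 (h ▸ hvZ0)
    have huI : u ∈ Icc 1 n := hZ0I huZ0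
    have hcu : c ≠ u := huc.symm
    have hcv : c ≠ v := hvc.symm
    have hvI : v ∈ Icc 1 n := hZ0I hvZ0
    -- cover property
    have hcov : ∀ W ∈ F, b ∉ W → u ∈ W ∨ v ∈ W := by
      intro W hWF hbW
      obtain ⟨t, htW, htZ⟩ := hInt W hWF Z0 (hBF hZ0B)
      rw [hZ0eq] at htZ
      rcases mem_insert.mp htZ with rfl | htZ
      · exact absurd htW hbW
      rcases mem_insert.mp htZ with rfl | htZ
      · exact Or.inl htW
      rcases mem_singleton.mp htZ with rfl
      exact Or.inr htW
    -- partition of FC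
    obtain ⟨Cu, hCu⟩ : ∃ S : Finset (Finset ℕ), S = FC.filter (fun W => v ∉ W) := ⟨_, rfl⟩
    obtain ⟨Cv, hCv⟩ : ∃ S : Finset (Finset ℕ), S = FC.filter (fun W => u ∉ W) := ⟨_, rfl⟩
    obtain ⟨Cuv, hCuv⟩ : ∃ S : Finset (Finset ℕ),
      S = FC.filter (fun W => u ∈ W ∧ v ∈ W) := ⟨_, rfl⟩
    have hCsplit : FC ⊆ Cu ∪ Cv ∪ Cuv := by
      intro W hW
      simp only [hCu, hCv, hCuv, mem_union, mem_filter]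
      by_cases h1 : u ∈ W <;> by_cases h2 : v ∈ W <;> tauto
    have hCsum : FC.card ≤ Cu.card + Cv.card + Cuv.card :=
      le_trans (card_le_card hCsplit)
        (le_trans (card_union_le _ _) (Nat.add_le_add_right (card_union_le _ _) _))
    -- the five-element set
    have habcuv_sub : ({a, b, c, u, v} : Finset ℕ) ⊆ Icc 1 n := by
      intro t ht
      simp only [mem_insert, mem_singleton] at ht
      rcases ht with rfl | rfl | rfl | rfl | rfl
      exacts [haI, hbI, hcI, huI, hvI]
    have habcuv_card : ({a, b, c, u, v} : Finset ℕ).card = 5 := by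
      rw [card_insert_of_notMem (by simp [hab, hac, hua.symm, hva.symm]),
        card_insert_of_notMem (by simp [hbc, hub.symm, hvb.symm]),
        card_insert_of_notMem (by simp [huc.symm, hvc.symm]),
        card_insert_of_notMem (by simp [huv]), card_singleton]
    have hcard5sd : ((Icc 1 n) \ {a, b, c, u, v}).card = n - 5 := by
      rw [card_sdiff_of_subset habcuv_sub, hIccCard, habcuv_card]
    -- bound Cu
    have hCuB : Cu.card ≤ n - 5 := by
      rw [← hcard5sd]
      refine card_le_of_fixed_pair Cu _ c u fun W hW => ?_
      rw [hCu] at hW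
      have hWC : W ∈ FC := mem_of_mem_filter W hW
      have hvW : v ∉ W := (mem_filter.mp hW).2
      obtain ⟨hcW, haW, hbW, hW3, hWI⟩ := hCfacts W hWC
      have huW : u ∈ W := (hcov W (hCF hWC) hbW).resolve_right hvW
      obtain ⟨y, hyW, hyc, hyu, hEq⟩ := extract3 hW3 hcW huW hcu
      refine ⟨y, mem_sdiff.mpr ⟨hWI hyW, ?_⟩, hEq⟩
      simp only [mem_insert, mem_singleton]
      push_neg
      exact ⟨fun h => haW (h ▸ hyW), fun h => hbW (h ▸ hyW), hyc, hyu,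
        fun h => hvW (h ▸ hyW)⟩
    have hCvB : Cv.card ≤ n - 5 := by
      rw [← hcard5sd]
      refine card_le_of_fixed_pair Cv _ c v fun W hW => ?_
      rw [hCv] at hW
      have hWC : W ∈ FC := mem_of_mem_filter W hW
      have huW : u ∉ W := (mem_filter.mp hW).2
      obtain ⟨hcW, haW, hbW, hW3, hWI⟩ := hCfacts W hWC
      have hvW : v ∈ W := (hcov W (hCF hWC) hbW).resolve_left huW
      obtain ⟨y, hyW, hyc, hyv, hEq⟩ := extract3 hW3 hcW hvW hcv
      refine ⟨y, mem_sdiff.mpr ⟨hWI hyW, ?_⟩, hEq⟩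
      simp only [mem_insert, mem_singleton]
      push_neg
      exact ⟨fun h => haW (h ▸ hyW), fun h => hbW (h ▸ hyW), hyc,
        fun h => huW (h ▸ hyW), hyv⟩
    have hCuvB : Cuv.card ≤ 1 := by
      have : Cuv ⊆ {({c, u, v} : Finset ℕ)} := by
        intro W hW
        rw [hCuv] at hW
        have hWC : W ∈ FC := mem_of_mem_filter W hW
        obtain ⟨huW, hvW⟩ := (mem_filter.mp hW).2
        obtain ⟨hcW, -, -, hW3, -⟩ := hCfacts W hWC
        rw [mem_singleton]
        refine (eq_of_subset_of_card_le ?_ ?_).symm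
        · intro t ht
          rcases mem_insert.mp ht with rfl | ht
          · exact hcW
          rcases mem_insert.mp ht with rfl | ht
          · exact huW
          rcases mem_singleton.mp ht with rfl
          exact hvW
        · rw [hW3, card_insert_of_notMem (by simp [huc.symm, hvc.symm]),
            card_insert_of_notMem (by simp [huv]), card_singleton]
      exact le_trans (card_le_card this) (by simp)
    have hCu2 : 2 ≤ Cu.card := by omega
    have hCv2 : 2 ≤ Cv.card := by omega
    -- extract two distinct sets from Cu
    obtain ⟨P1, hP1, P2, hP2, hP12⟩ := one_lt_card.mp (by omega : 1 < Cu.card)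
    obtain ⟨Q1, hQ1, Q2, hQ2, hQ12⟩ := one_lt_card.mp (by omega : 1 < Cv.card)
    have hPs : ∀ P ∈ Cu, ∃ y, y ∉ ({a, b, c, u, v} : Finset ℕ) ∧ P = {c, u, y} ∧ P ∈ F := by
      intro P hP
      rw [hCu] at hP
      have hWC : P ∈ FC := mem_of_mem_filter P hP
      have hvW : v ∉ P := (mem_filter.mp hP).2
      obtain ⟨hcW, haW, hbW, hW3, hWI⟩ := hCfacts P hWC
      have huW : u ∈ P := (hcov P (hCF hWC) hbW).resolve_right hvW
      obtain ⟨y, hyW, hyc, hyu, hEq⟩ := extract3 hW3 hcW huW hcu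
      refine ⟨y, ?_, hEq, hCF hWC⟩
      simp only [mem_insert, mem_singleton]
      push_neg
      exact ⟨fun h => haW (h ▸ hyW), fun h => hbW (h ▸ hyW), hyc, hyu,
        fun h => hvW (h ▸ hyW)⟩
    have hQs : ∀ Q ∈ Cv, ∃ w, w ∉ ({a, b, c, u, v} : Finset ℕ) ∧ Q = {c, v, w} ∧ Q ∈ F := by
      intro Q hQ
      rw [hCv] at hQ
      have hWC : Q ∈ FC := mem_of_mem_filter Q hQ
      have huW : u ∉ Q := (mem_filter.mp hQ).2
      obtain ⟨hcW, haW, hbW, hW3, hWI⟩ := hCfacts Q hWC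
      have hvW : v ∈ Q := (hcov Q (hCF hWC) hbW).resolve_left huW
      obtain ⟨w, hwW, hwc, hwv, hEq⟩ := extract3 hW3 hcW hvW hcv
      refine ⟨w, ?_, hEq, hCF hWC⟩
      simp only [mem_insert, mem_singleton]
      push_neg
      exact ⟨fun h => haW (h ▸ hwW), fun h => hbW (h ▸ hwW), hwc,
        fun h => huW (h ▸ hwW), hwv⟩
    obtain ⟨y1, hy1, hP1eq, hP1F⟩ := hPs P1 hP1
    obtain ⟨y2, hy2, hP2eq, hP2F⟩ := hPs P2 hP2
    obtain ⟨w1, hw1, hQ1eq, hQ1F⟩ := hQs Q1 hQ1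
    obtain ⟨w2, hw2, hQ2eq, hQ2F⟩ := hQs Q2 hQ2
    have hy12 : y1 ≠ y2 := by rintro rfl; exact hP12 (hP1eq.trans hP2eq.symm)
    have hw12 : w1 ≠ w2 := by rintro rfl; exact hQ12 (hQ1eq.trans hQ2eq.symm)
    simp only [mem_insert, mem_singleton] at hy1 hy2 hw1 hw2
    push_neg at hy1 hy2 hw1 hw2
    -- FA is contained in a 3-element family
    have hAsub : FA ⊆ {({a, c, u} : Finset ℕ), ({a, c, v} : Finset ℕ),
        ({a, u, v} : Finset ℕ)} := by
      intro Z hZ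
      rw [hFA, mem_filter] at hZ
      obtain ⟨hZF, haZ, hbZ⟩ := hZ
      obtain ⟨hZI, hZ3⟩ := hmem Z hZF
      have horZ : u ∈ Z ∨ v ∈ Z := hcov Z hZF hbZ
      simp only [mem_insert, mem_singleton]
      by_cases hcZ : c ∈ Z
      · obtain ⟨s, hsZ, hsa, hsc, hEq⟩ := extract3 hZ3 haZ hcZ hac
        rcases horZ with huZ | hvZ
        · left
          rw [hEq] at huZ
          rcases mem_insert.mp huZ with rfl | huZ
          · exact absurd rfl hua
          rcases mem_insert.mp huZ with rfl | huZ
          · exact absurd rfl huc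
          rcases mem_singleton.mp huZ with rfl
          exact hEq
        · right; left
          rw [hEq] at hvZ
          rcases mem_insert.mp hvZ with rfl | hvZ
          · exact absurd rfl hva
          rcases mem_insert.mp hvZ with rfl | hvZ
          · exact absurd rfl hvc
          rcases mem_singleton.mp hvZ with rfl
          exact hEq
      · -- c ∉ Z : show u ∈ Z and v ∈ Z
        have hmeet : ∀ G ∈ F, ∀ g r : ℕ, G = {c, g, r} → g ∉ Z → r ∈ Z := by
          intro G hGF g r hGeq hgZ
          obtain ⟨t, htZ, htG⟩ := hInt Z hZF G hGF
          rw [hGeq] at htG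
          rcases mem_insert.mp htG with rfl | htG
          · exact absurd htZ hcZ
          rcases mem_insert.mp htG with rfl | htG
          · exact absurd htZ hgZ
          rcases mem_singleton.mp htG with rfl
          exact htZ
        have huZ : u ∈ Z := by
          by_contra huZ
          have hvZ : v ∈ Z := horZ.resolve_left huZ
          have hy1Z : y1 ∈ Z := hmeet P1 hP1F u y1 hP1eq huZ
          have hy2Z : y2 ∈ Z := hmeet P2 hP2F u y2 hP2eq huZ
          have h4 : ({a, v, y1, y2} : Finset ℕ) ⊆ Z := by
            intro t ht
            simp only [mem_insert, mem_singleton] at ht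
            rcases ht with rfl | rfl | rfl | rfl
            exacts [haZ, hvZ, hy1Z, hy2Z]
          have hc4 : ({a, v, y1, y2} : Finset ℕ).card = 4 := by
            rw [card_insert_of_notMem (by simp [hva.symm, (hy1.1).symm, (hy2.1).symm]),
              card_insert_of_notMem (by simp [(hy1.2.2.2.2).symm, (hy2.2.2.2.2).symm]),
              card_insert_of_notMem (by simp [hy12]), card_singleton]
          have := card_le_card h4
          omega
        have hvZ : v ∈ Z := by
          by_contra hvZ
          have hw1Z : w1 ∈ Z := hmeet Q1 hQ1F v w1 hQ1eq hvZ
          have hw2Z : w2 ∈ Z := hmeet Q2 hQ2F v w2 hQ2eq hvZ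
          have h4 : ({a, u, w1, w2} : Finset ℕ) ⊆ Z := by
            intro t ht
            simp only [mem_insert, mem_singleton] at ht
            rcases ht with rfl | rfl | rfl | rfl
            exacts [haZ, huZ, hw1Z, hw2Z]
          have hc4 : ({a, u, w1, w2} : Finset ℕ).card = 4 := by
            rw [card_insert_of_notMem (by simp [hua.symm, (hw1.1).symm, (hw2.1).symm]),
              card_insert_of_notMem (by simp [(hw1.2.2.2.1).symm, (hw2.2.2.2.1).symm]),
              card_insert_of_notMem (by simp [hw12]), card_singleton]
          have := card_le_card h4
          omega
        right; right
        obtain ⟨s, hsZ, hsa, hsu, hEq⟩ := extract3 hZ3 haZ huZ hua.symm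
        rw [hEq] at hvZ
        rcases mem_insert.mp hvZ with rfl | hvZ'
        · exact absurd rfl hva
        rcases mem_insert.mp hvZ' with rfl | hvZ'
        · exact absurd rfl huv.symm
        rcases mem_singleton.mp hvZ' with rfl
        exact hEq
    have hA3 : FA.card ≤ 3 := by
      calc FA.card ≤ ({({a, c, u} : Finset ℕ), ({a, c, v} : Finset ℕ),
            ({a, u, v} : Finset ℕ)} : Finset (Finset ℕ)).card := card_le_card hAsub
        _ ≤ ({({a, c, v} : Finset ℕ), ({a, u, v} : Finset ℕ)} : Finset (Finset ℕ)).card + 1 :=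
            card_insert_le _ _
        _ ≤ (({({a, u, v} : Finset ℕ)} : Finset (Finset ℕ)).card + 1) + 1 :=
            Nat.add_le_add_right (card_insert_le _ _) 1
        _ = 3 := by rw [card_singleton]
    clear * - hA3 hAge hn
    omega
  · -- |D| = 2
    obtain ⟨Z1, Z2, hZ12, hFDeq⟩ := card_eq_two.mp hd
    have m1 : Z1 ∈ FD := by rw [hFDeq]; simp
    have m2 : Z2 ∈ FD := by rw [hFDeq]; simp
    obtain ⟨z1, hz1I, hz1a, hz1b, hZ1eq⟩ := hDstruct Z1 m1
    obtain ⟨z2, hz2I, hz2a, hz2b, hZ2eq⟩ := hDstruct Z2 m2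
    have hz12 : z1 ≠ z2 := by rintro rfl; exact hZ12 (hZ1eq.trans hZ2eq.symm)
    have hsub4 : ({a, b, z1, z2} : Finset ℕ) ⊆ Icc 1 n := by
      intro t ht
      simp only [mem_insert, mem_singleton] at ht
      rcases ht with rfl | rfl | rfl | rfl
      exacts [haI, hbI, hz1I, hz2I]
    have hcard4 : ({a, b, z1, z2} : Finset ℕ).card = 4 := by
      rw [card_insert_of_notMem (by simp [hab, hz1a.symm, hz2a.symm]),
        card_insert_of_notMem (by simp [hz1b.symm, hz2b.symm]),
        card_insert_of_notMem (by simp [hz12]), card_singleton]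
    have hCb : FC.card ≤ n - 4 := by
      have : FC.card ≤ ((Icc 1 n) \ {a, b, z1, z2}).card := by
        refine card_le_of_fixed_pair FC _ z1 z2 fun W hW => ?_
        obtain ⟨hcW, haW, hbW, hW3, hWI⟩ := hCfacts W hW
        have h1W : z1 ∈ W := hHit W hW Z1 m1 z1 hZ1eq
        have h2W : z2 ∈ W := hHit W hW Z2 m2 z2 hZ2eq
        obtain ⟨y, hyW, hy1, hy2, hEq⟩ := extract3 hW3 h1W h2W hz12
        refine ⟨y, mem_sdiff.mpr ⟨hWI hyW, ?_⟩, hEq⟩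
        simp only [mem_insert, mem_singleton]
        push_neg
        exact ⟨fun h => haW (h ▸ hyW), fun h => hbW (h ▸ hyW), hy1, hy2⟩
      rw [card_sdiff_of_subset hsub4, hIccCard, hcard4] at this
      exact this
    omega
  · -- |D| = 3
    obtain ⟨Z1, Z2, Z3, h12, h13, h23, hFDeq⟩ := card_eq_three.mp hd
    have m1 : Z1 ∈ FD := by rw [hFDeq]; simp
    have m2 : Z2 ∈ FD := by rw [hFDeq]; simp
    have m3 : Z3 ∈ FD := by rw [hFDeq]; simp
    obtain ⟨z1, hz1I, hz1a, hz1b, hZ1eq⟩ := hDstruct Z1 m1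
    obtain ⟨z2, hz2I, hz2a, hz2b, hZ2eq⟩ := hDstruct Z2 m2
    obtain ⟨z3, hz3I, hz3a, hz3b, hZ3eq⟩ := hDstruct Z3 m3
    have hz12 : z1 ≠ z2 := by rintro rfl; exact h12 (hZ1eq.trans hZ2eq.symm)
    have hz13 : z1 ≠ z3 := by rintro rfl; exact h13 (hZ1eq.trans hZ3eq.symm)
    have hz23 : z2 ≠ z3 := by rintro rfl; exact h23 (hZ2eq.trans hZ3eq.symm)
    have hCsingle : FC ⊆ {({z1, z2, z3} : Finset ℕ)} := by
      intro W hW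
      obtain ⟨-, -, -, hW3, -⟩ := hCfacts W hW
      have h1W : z1 ∈ W := hHit W hW Z1 m1 z1 hZ1eq
      have h2W : z2 ∈ W := hHit W hW Z2 m2 z2 hZ2eq
      have h3W : z3 ∈ W := hHit W hW Z3 m3 z3 hZ3eq
      rw [mem_singleton]
      refine (eq_of_subset_of_card_le ?_ ?_).symm
      · intro t ht
        rcases mem_insert.mp ht with rfl | ht
        · exact h1W
        rcases mem_insert.mp ht with rfl | ht
        · exact h2W
        rcases mem_singleton.mp ht with rfl
        exact h3W
      · rw [hW3, card_insert_of_notMem (by simp [hz12, hz13]),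
          card_insert_of_notMem (by simp [hz23]), card_singleton]
    have : FC.card ≤ 1 := le_trans (card_le_card hCsingle) (by simp)
    omega
end

section
/- For n ≥ 5, let c be a coloring of the 2-subsets of {1,...,n} with n-3 colors such that no two disjoint sets receive the same color. For r ≥ 0, let p_r be the number of colors λ ≤ r with |c⁻¹(λ)| ≥ 4 (and hence all sets in c⁻¹(λ) share a common element), let M_r = Σ_{i=1}^{r} |c⁻¹(i)|, and N_r = p_r(n-1) - p_r(p_r-1)/2 + 3(r - p_r). Then for all 1 ≤ r ≤ n-3, M_r ≤ N_r. -/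
/-!
Each colour class with at least four members is an intersecting family of 2-sets, hence a star
with some centre. Distinct colour classes are disjoint, so the `p` large classes among the first
`r` colours together consist of 2-sets meeting a set of at most `p` centres; padding the centres
to exactly `p` points, there are `p (n - 1) - C(p, 2)` such 2-sets. Each of the remaining `r - p`
classes has at most three members.
-/

open Finset

theorem Nat.choose_two_add_choose_two_of_le {q n : ℕ} (h : q ≤ n) :
    n.choose 2 + q.choose 2 = (n - q).choose 2 + q * (n - 1) := by
  obtain ⟨m, rfl⟩ := Nat.exists_eq_add_of_le' h
  rcases q with _ | q
  · simp
  rw [Nat.add_sub_cancel, show m + (q + 1) - 1 = m + q by omega]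
  qify [Nat.cast_choose_two]
  ring

namespace Finset

variable {α : Type*} [DecidableEq α]

theorem exists_forall_mem_of_intersecting_of_card_two {G : Finset (Finset α)}
    (hG2 : ∀ A ∈ G, #A = 2) (hG : (G : Set (Finset α)).Intersecting) (h4 : 3 < #G) :
    ∃ x, ∀ A ∈ G, x ∈ A := by
  by_contra! hno
  obtain ⟨A, hA⟩ := card_pos.mp (by omega : 0 < #G)
  obtain ⟨a, b, hab, rfl⟩ := card_eq_two.mp (hG2 A hA)
  obtain ⟨C, hC, haC⟩ := hno a
  obtain ⟨D, hD, hbD⟩ := hno b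
  obtain ⟨x, y, hxy, rfl⟩ := card_eq_two.mp (hG2 C hC)
  obtain ⟨u, v, huv, rfl⟩ := card_eq_two.mp (hG2 D hD)
  -- `{a, b}`, `C ∌ a` and `D ∌ b` pairwise meet, so they are the sides of a triangle `{a, b, c}`,
  -- and a 2-set meeting all three sides is itself a side.
  have hGT : G ⊆ powersetCard 2 (insert a {x, y}) := by
    intro E hE
    obtain ⟨e, f, hef, rfl⟩ := card_eq_two.mp (hG2 E hE)
    have := hG hA hC
    have := hG hA hD
    have := hG hC hD
    have := hG hA hE
    have := hG hC hE
    have := hG hD hE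
    simp only [disjoint_insert_left, disjoint_insert_right, disjoint_singleton, mem_insert,
      mem_singleton, not_and_or, not_not] at *
    refine mem_powersetCard.mpr ⟨fun z hz => ?_, card_pair hef⟩
    simp only [mem_insert, mem_singleton] at hz ⊢
    grind
  have h3 : #(insert a {x, y}) ≤ 3 := (card_insert_le _ _).trans (by rw [card_pair hxy])
  have : #G ≤ 3 := calc
    #G ≤ #(powersetCard 2 (insert a {x, y})) := card_le_card hGT
    _ = (#(insert a {x, y})).choose 2 := card_powersetCard _ _
    _ ≤ Nat.choose 3 2 := Nat.choose_le_choose 2 h3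
  omega

def pairsMeeting (S X : Finset α) : Finset (Finset α) :=
  (S.powersetCard 2).filter fun A => ¬Disjoint A X

theorem card_pairsMeeting_add_choose_two {S X : Finset α} (hXS : X ⊆ S) :
    #(pairsMeeting S X) + (#X).choose 2 = #X * (#S - 1) := by
  have hcompl : (S.powersetCard 2).filter (fun A => ¬¬Disjoint A X) = (S \ X).powersetCard 2 := by
    ext A
    simp only [not_not, mem_filter, mem_powersetCard, subset_sdiff]
    tauto
  have hsplit := card_filter_add_card_filter_not (s := S.powersetCard 2) (fun A => ¬Disjoint A X)
  rw [hcompl, card_powersetCard, card_powersetCard, card_sdiff_of_subset hXS] at hsplit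
  have := Nat.choose_two_add_choose_two_of_le (card_le_card hXS)
  unfold pairsMeeting
  omega

theorem sum_card_add_choose_two_le_of_forall_exists_mem {ι : Type*} {S : Finset α}
    {B : Finset ι} {F : ι → Finset (Finset α)} (hFS : ∀ l ∈ B, F l ⊆ S.powersetCard 2)
    (hF : (B : Set ι).PairwiseDisjoint F) (hstar : ∀ l ∈ B, ∃ x, ∀ A ∈ F l, x ∈ A)
    (hB : #B ≤ #S) :
    ∑ l ∈ B, #(F l) + (#B).choose 2 ≤ #B * (#S - 1) := by
  obtain rfl | ⟨s, -⟩ := S.eq_empty_or_nonempty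
  · simp_all
  have : Nonempty α := ⟨s⟩
  choose! center hcenter using hstar
  have hcard : #(B.image center ∩ S) ≤ #B := (card_le_card inter_subset_left).trans card_image_le
  obtain ⟨X, hX, hXS, hXcard⟩ := exists_subsuperset_card_eq inter_subset_right hcard hB
  rw [← hXcard, ← card_pairsMeeting_add_choose_two hXS, ← card_biUnion hF]
  gcongr
  refine biUnion_subset.mpr fun l hl A hA => mem_filter.mpr ⟨hFS l hl hA, ?_⟩
  have hcA := hcenter l hl A hA
  have hcS := (mem_powersetCard.mp (hFS l hl hA)).1 hcA
  exact not_disjoint_iff.mpr ⟨center l, hcA, hX (mem_inter.mpr ⟨mem_image_of_mem _ hl, hcS⟩)⟩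

end Finset

theorem counting_invariant_k2_general (n : ℕ) (c : Finset ℕ → ℕ)
    (hmono : ∀ A ⊆ Finset.Icc 1 n, ∀ B ⊆ Finset.Icc 1 n,
      A.card = 2 → B.card = 2 → Disjoint A B → c A ≠ c B)
    (F : ℕ → Finset (Finset ℕ))
    (hF : ∀ l, F l = (Finset.Icc 1 n).powerset.filter (fun A => A.card = 2 ∧ c A = l))
    (p M N : ℕ → ℕ)
    (hp : ∀ r, p r = ((Finset.Icc 1 r).filter (fun l => 4 ≤ (F l).card)).card)
    (hM : ∀ r, M r = ∑ i ∈ Finset.Icc 1 r, (F i).card)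
    (hN : ∀ r, N r = p r * (n - 1) - p r * (p r - 1) / 2 + 3 * (r - p r)) :
    ∀ r, 1 ≤ r → r ≤ n - 3 → M r ≤ N r := by
  intro r _ hr
  set B := (Icc 1 r).filter fun l => 4 ≤ #(F l)
  have hFmem : ∀ {l A}, A ∈ F l ↔ (A ⊆ Icc 1 n ∧ #A = 2) ∧ c A = l := by
    intro l A
    rw [hF, mem_filter, mem_powerset, and_assoc]
  have hstar : ∀ l ∈ B, ∃ x, ∀ A ∈ F l, x ∈ A := by
    refine fun l hl => exists_forall_mem_of_intersecting_of_card_two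
      (fun A hA => (hFmem.mp hA).1.2) (fun A hA A' hA' hdisj => ?_) (mem_filter.mp hl).2
    obtain ⟨⟨hAS, hA2⟩, hcA⟩ := hFmem.mp hA
    obtain ⟨⟨hAS', hA2'⟩, hcA'⟩ := hFmem.mp hA'
    exact hmono A hAS A' hAS' hA2 hA2' hdisj (hcA.trans hcA'.symm)
  have hdisj : (B : Set ℕ).PairwiseDisjoint F := fun l _ l' _ hne =>
    disjoint_left.mpr fun A hA hA' => hne ((hFmem.mp hA).2.symm.trans (hFmem.mp hA').2)
  have hBsub : B ⊆ Icc 1 r := filter_subset _ _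
  have hBr : #B ≤ r := (card_le_card hBsub).trans (by simp)
  have hlarge := sum_card_add_choose_two_le_of_forall_exists_mem
    (fun l _ A hA => mem_powersetCard.mpr (hFmem.mp hA).1) hdisj hstar (by simp; omega)
  have hsmall : ∑ l ∈ Icc 1 r \ B, #(F l) ≤ #(Icc 1 r \ B) * 3 :=
    sum_le_card_nsmul _ _ 3 fun l hl => by
      simp only [B, mem_sdiff, mem_filter, not_and, not_le] at hl
      exact Nat.le_of_lt_succ (hl.2 hl.1)
  rw [card_sdiff_of_subset hBsub, Nat.card_Icc] at hsmall
  rw [Nat.card_Icc, Nat.add_sub_cancel] at hlarge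
  rw [hM, hN, show p r = #B from hp r, ← Nat.choose_two_right, ← sum_sdiff hBsub]
  omega

theorem counting_invariant_k2 (n : ℕ) (hn : 5 ≤ n) (c : Finset ℕ → ℕ)
    (hc : ∀ A ⊆ Finset.Icc 1 n, A.card = 2 → c A ∈ Finset.Icc 1 (n - 3))
    (hmono : ∀ A ⊆ Finset.Icc 1 n, ∀ B ⊆ Finset.Icc 1 n,
      A.card = 2 → B.card = 2 → Disjoint A B → c A ≠ c B)
    (F : ℕ → Finset (Finset ℕ))
    (hF : ∀ l, F l = (Finset.Icc 1 n).powerset.filter (fun A => A.card = 2 ∧ c A = l))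
    (p M N : ℕ → ℕ)
    (hp : ∀ r, p r = ((Finset.Icc 1 r).filter (fun l => 4 ≤ (F l).card)).card)
    (hM : ∀ r, M r = ∑ i ∈ Finset.Icc 1 r, (F i).card)
    (hN : ∀ r, N r = p r * (n - 1) - p r * (p r - 1) / 2 + 3 * (r - p r)) :
    ∀ r, 1 ≤ r → r ≤ n - 3 → M r ≤ N r :=
  counting_invariant_k2_general n c hmono F hF p M N hp hM hN
end

section
/- Let Φ be the map from (k+1)-subsets of {1,...,n} to k-subsets of {1,...,n-2} defined by Φ(A) = A_{≤k} if A_{≤k} ⊆ [n-2], and Φ(A) = P ∪ {λ} when A = P ∪ {n-1,n} with λ the largest element of [n-2] not in P. Then Φ maps stable sets to stable sets: if A is a (k+1)-subset of [n] containing no two cyclically consecutive elements of [n], then Φ(A) contains no two cyclically consecutive elements of [n-2]. Moreover, every pair of disjoint stable k-subsets of [n-2] is the image of a pair of disjoint stable (k+1)-subsets of [n]. -/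
/-- The set of the `k` smallest elements of `A` (all of `A` if `A.card ≤ k`). -/
def firsts (k : ℕ) (A : Finset ℕ) : Finset ℕ :=
  A.filter (fun x => (A.filter (fun y => y < x)).card < k)

/-- The substitution map from `(k+1)`-subsets of `[n]` to `k`-subsets of `[n-2]`:
`Φ(A) = A_{≤k}` when `A_{≤k} ⊆ [n-2]`, and otherwise (when `n-1, n ∈ A`,
`A = P ∪ {n-1, n}`) `Φ(A) = P ∪ {λ}` with `λ` the largest element of `[n-2]`
not in `P`. -/
def Phi (k n : ℕ) (A : Finset ℕ) : Finset ℕ :=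
  if firsts k A ⊆ Finset.Icc 1 (n - 2) then firsts k A
  else insert ((Finset.Icc 1 (n - 2) \ (A \ {n - 1, n})).sup id) (A \ {n - 1, n})

/-- `A` is a stable subset of `[n]`: it contains no two cyclically consecutive
elements of `{1, ..., n}`. -/
def Stable (n : ℕ) (A : Finset ℕ) : Prop :=
  A ⊆ Finset.Icc 1 n ∧ ∀ i ∈ A, i % n + 1 ∉ A

lemma firsts_subset (k : ℕ) (A : Finset ℕ) : firsts k A ⊆ A :=
  Finset.filter_subset _ _

lemma exists_gt_of_mem_firsts {k : ℕ} {A : Finset ℕ} (hA : k < A.card) {x : ℕ}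
    (hx : x ∈ firsts k A) : ∃ M ∈ A, x < M := by
  obtain ⟨hxA, hlt⟩ := Finset.mem_filter.mp hx
  by_contra h
  push_neg at h
  have hsub : A ⊆ insert x (A.filter (fun y => y < x)) := by
    intro y hy
    rcases lt_or_eq_of_le (h y hy) with h' | h'
    · exact Finset.mem_insert_of_mem (Finset.mem_filter.mpr ⟨hy, h'⟩)
    · exact h' ▸ Finset.mem_insert_self _ _
  have h1 := Finset.card_le_card hsub
  have h2 := Finset.card_insert_le x (A.filter (fun y => y < x))
  omega

lemma firsts_insert_top {k : ℕ} {C : Finset ℕ} {x : ℕ} (hxC : x ∉ C)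
    (hcard : C.card = k) (hlt : ∀ c ∈ C, c < x) : firsts k (insert x C) = C := by
  ext y
  simp only [firsts, Finset.mem_filter, Finset.mem_insert]
  constructor
  · rintro ⟨rfl | hyC, hy⟩
    · exfalso
      have hfe : (insert y C).filter (fun z => z < y) = C := by
        ext z
        simp only [Finset.mem_filter, Finset.mem_insert]
        constructor
        · rintro ⟨rfl | hz, hzy⟩
          · omega
          · exact hz
        · intro hz; exact ⟨Or.inr hz, hlt z hz⟩
      rw [hfe, hcard] at hy; omega
    · exact hyC
  · intro hyC
    refine ⟨Or.inr hyC, ?_⟩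
    have hsub : (insert x C).filter (fun z => z < y) ⊆ C.erase y := by
      intro z hz
      obtain ⟨hz1, hz2⟩ := Finset.mem_filter.mp hz
      rcases Finset.mem_insert.mp hz1 with rfl | hz1
      · exact absurd (hlt y hyC) (by omega)
      · exact Finset.mem_erase.mpr ⟨by omega, hz1⟩
    have h1 := Finset.card_le_card hsub
    have h2 := Finset.card_erase_of_mem hyC
    have h3 : 0 < C.card := Finset.card_pos.mpr ⟨y, hyC⟩
    omega

lemma extend_stable {k n : ℕ} (hn : 3 ≤ n) {C : Finset ℕ}
    (hC : C ⊆ Finset.Icc 1 (n - 2)) (hcard : C.card = k) (hst : Stable (n - 2) C)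
    {x : ℕ} (hx : (x = n - 1 ∧ n - 2 ∉ C) ∨ (x = n ∧ 1 ∉ C)) :
    insert x C ⊆ Finset.Icc 1 n ∧ (insert x C).card = k + 1 ∧
      Stable n (insert x C) ∧ Phi k n (insert x C) = C := by
  have hxn : n - 1 ≤ x ∧ x ≤ n := by rcases hx with ⟨h, _⟩ | ⟨h, _⟩ <;> omega
  have hxC : x ∉ C := fun h => by have := Finset.mem_Icc.mp (hC h); omega
  have hlt : ∀ c ∈ C, c < x := fun c hc => by
    have := Finset.mem_Icc.mp (hC hc); omega
  have hsub : insert x C ⊆ Finset.Icc 1 n := by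
    intro a ha
    rcases Finset.mem_insert.mp ha with rfl | ha
    · exact Finset.mem_Icc.mpr (by omega)
    · have := Finset.mem_Icc.mp (hC ha); exact Finset.mem_Icc.mpr (by omega)
  have hfir : firsts k (insert x C) = C := firsts_insert_top hxC hcard hlt
  refine ⟨hsub, by rw [Finset.card_insert_of_notMem hxC, hcard], ⟨hsub, ?_⟩, ?_⟩
  · intro i hi hmem
    rcases Finset.mem_insert.mp hi with rfl | hiC
    · rcases hx with ⟨rfl, hx2⟩ | ⟨rfl, hx2⟩
      · rw [Nat.mod_eq_of_lt (by omega)] at hmem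
        rcases Finset.mem_insert.mp hmem with h | h
        · omega
        · have := Finset.mem_Icc.mp (hC h); omega
      · rw [Nat.mod_self] at hmem
        rcases Finset.mem_insert.mp hmem with h | h
        · omega
        · exact hx2 h
    · have hi2 := Finset.mem_Icc.mp (hC hiC)
      rw [Nat.mod_eq_of_lt (by omega)] at hmem
      rcases Finset.mem_insert.mp hmem with h | h
      · rcases hx with ⟨hx1, hx2⟩ | ⟨hx1, hx2⟩
        · have : i = n - 2 := by omega
          exact hx2 (this ▸ hiC)
        · omega
      · have := Finset.mem_Icc.mp (hC h)
        have hst2 := hst.2 i hiC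
        rw [Nat.mod_eq_of_lt (by omega)] at hst2
        exact hst2 h
  · rw [Phi, hfir, if_pos hC]

lemma build_pair {k n : ℕ} (hn : 3 ≤ n) {C D : Finset ℕ}
    (hC : C ⊆ Finset.Icc 1 (n - 2)) (hD : D ⊆ Finset.Icc 1 (n - 2))
    (hcC : C.card = k) (hcD : D.card = k)
    (hsC : Stable (n - 2) C) (hsD : Stable (n - 2) D)
    {x y : ℕ} (hxy : x ≠ y)
    (hx : (x = n - 1 ∧ n - 2 ∉ C) ∨ (x = n ∧ 1 ∉ C))
    (hy : (y = n - 1 ∧ n - 2 ∉ D) ∨ (y = n ∧ 1 ∉ D))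
    (hCD : Disjoint C D) :
    ∃ A B, A ⊆ Finset.Icc 1 n ∧ B ⊆ Finset.Icc 1 n ∧
      A.card = k + 1 ∧ B.card = k + 1 ∧ Stable n A ∧ Stable n B ∧
      Disjoint A B ∧ Phi k n A = C ∧ Phi k n B = D := by
  obtain ⟨hA1, hA2, hA3, hA4⟩ := extend_stable hn hC hcC hsC hx
  obtain ⟨hB1, hB2, hB3, hB4⟩ := extend_stable hn hD hcD hsD hy
  refine ⟨insert x C, insert y D, hA1, hB1, hA2, hB2, hA3, hB3, ?_, hA4, hB4⟩
  rw [Finset.disjoint_left]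
  intro a haC haD
  have hxb : n - 1 ≤ x := by rcases hx with ⟨h, _⟩ | ⟨h, _⟩ <;> omega
  have hyb : n - 1 ≤ y := by rcases hy with ⟨h, _⟩ | ⟨h, _⟩ <;> omega
  rcases Finset.mem_insert.mp haC with rfl | haC
  · rcases Finset.mem_insert.mp haD with h | h
    · exact hxy h
    · have := Finset.mem_Icc.mp (hD h); omega
  · rcases Finset.mem_insert.mp haD with rfl | h
    · have := Finset.mem_Icc.mp (hC haC); omega
    · exact Finset.disjoint_left.mp hCD haC h

theorem substitution_reduction_stable (k n : ℕ) (hk : 1 ≤ k) (hn : 3 ≤ n) :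
    (∀ A, A ⊆ Finset.Icc 1 n → A.card = k + 1 → Stable n A →
      Stable (n - 2) (Phi k n A)) ∧
    (∀ C D, C ⊆ Finset.Icc 1 (n - 2) → D ⊆ Finset.Icc 1 (n - 2) →
      C.card = k → D.card = k → Stable (n - 2) C → Stable (n - 2) D → Disjoint C D →
      ∃ A B, A ⊆ Finset.Icc 1 n ∧ B ⊆ Finset.Icc 1 n ∧
        A.card = k + 1 ∧ B.card = k + 1 ∧ Stable n A ∧ Stable n B ∧
        Disjoint A B ∧ Phi k n A = C ∧ Phi k n B = D) := by
  constructor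
  · intro A hA hcard hst
    have hklt : k < A.card := by omega
    have key : firsts k A ⊆ Finset.Icc 1 (n - 2) := by
      intro x hx
      have hxA : x ∈ A := firsts_subset _ _ hx
      have hx1 := Finset.mem_Icc.mp (hA hxA)
      obtain ⟨M, hM, hxM⟩ := exists_gt_of_mem_firsts hklt hx
      have hM1 := Finset.mem_Icc.mp (hA hM)
      rw [Finset.mem_Icc]
      by_contra h
      have hxe : x = n - 1 := by omega
      have hMe : M = n := by omega
      have hst2 := hst.2 x hxA
      rw [Nat.mod_eq_of_lt (by omega)] at hst2
      exact hst2 (by rw [show x + 1 = M by omega]; exact hM)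
    rw [Phi, if_pos key]
    refine ⟨key, ?_⟩
    intro i hi hmem
    have hiA : i ∈ A := firsts_subset _ _ hi
    have hi2 := Finset.mem_Icc.mp (key hi)
    by_cases hcase : i < n - 2
    · rw [Nat.mod_eq_of_lt (by omega)] at hmem
      have hst2 := hst.2 i hiA
      rw [Nat.mod_eq_of_lt (by omega)] at hst2
      exact hst2 (firsts_subset _ _ hmem)
    · have hie : i = n - 2 := by omega
      rw [hie, Nat.mod_self] at hmem
      have h1A : 1 ∈ A := firsts_subset _ _ hmem
      obtain ⟨M, hM, hxM⟩ := exists_gt_of_mem_firsts hklt hi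
      have hM1 := Finset.mem_Icc.mp (hA hM)
      rcases Nat.lt_or_ge M n with hMlt | hMge
      · -- M = n - 1
        have hst2 := hst.2 i hiA
        rw [Nat.mod_eq_of_lt (by omega)] at hst2
        exact hst2 (by rw [show i + 1 = M by omega]; exact hM)
      · -- M = n
        have hst2 := hst.2 M hM
        rw [show M = n by omega, Nat.mod_self] at hst2
        exact hst2 h1A
  · intro C D hC hD hcC hcD hsC hsD hCD
    by_cases h1 : 1 ∈ C ∨ n - 2 ∈ D
    · have hnC : n - 2 ∉ C := by
        rcases h1 with h | h
        · intro hc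
          have h2 := hsC.2 (n - 2) hc
          rw [Nat.mod_self] at h2
          exact h2 h
        · exact Finset.disjoint_right.mp hCD h
      have h1D : 1 ∉ D := by
        rcases h1 with h | h
        · exact Finset.disjoint_left.mp hCD h
        · intro h1d
          have h2 := hsD.2 (n - 2) h
          rw [Nat.mod_self] at h2
          exact h2 h1d
      exact build_pair hn hC hD hcC hcD hsC hsD (by omega)
        (Or.inl ⟨rfl, hnC⟩) (Or.inr ⟨rfl, h1D⟩) hCD
    · push_neg at h1
      exact build_pair hn hC hD hcC hcD hsC hsD (by omega)
        (Or.inr ⟨rfl, h1.1⟩) (Or.inl ⟨rfl, h1.2⟩) hCD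
end
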